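/- arXiv:1302.6346 — 9 statements merged into one kernel-verified Lean document; each statement's English description precedes it below -/
import Mathlib

section
/- Let X be a non-empty subset of {0,1}^n and let N(X) = {x ⊕ e_i | x ∈ X, i ∈ {1,…,n}} be the set of points at Hamming distance 1 from some point of X. If X and N(X) are disjoint and |X| ≥ |N(X)|, then X is either the set of all points with an even number of ones, or the set of all points with an odd number of ones. -/
/-!
Flipping coordinate `i` is an involution mapping `X` into `N`; since `|N| ≤ |X|` it maps `X` onto
`N`, hence also maps `N` into `X`. So each flip swaps `X` and `N` and changes the parity of the
weight. Walking from a point `x₀ ∈ X` to any `y` by single flips, `y` lies in `X` when its parity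
is that of `x₀` and in `N` otherwise; as `X ∩ N = ∅`, `X` is exactly the parity class of `x₀`.
-/

open Finset Function

theorem Function.Involutive.mapsTo_of_card_le {α : Type*} [DecidableEq α] {σ : α → α}
    (hσ : Involutive σ) {X N : Finset α} (hXN : Set.MapsTo σ X N) (hcard : #N ≤ #X) :
    Set.MapsTo σ N X := by
  have himage : X.image σ = N :=
    eq_of_subset_of_card_le (image_subset_iff.2 hXN)
      (by rwa [card_image_of_injective _ hσ.injective])
  intro y hy
  obtain ⟨x, hx, rfl⟩ := mem_image.1 (himage ▸ hy)
  rwa [hσ x]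

section flipAt

variable {ι : Type*} [DecidableEq ι]

def flipAt (x : ι → Bool) (i : ι) : ι → Bool :=
  update x i (!x i)

theorem flipAt_involutive (i : ι) : Involutive (flipAt · i) := by
  intro x
  ext j
  rcases eq_or_ne j i with rfl | hji <;> simp [flipAt, *]

theorem even_card_filter_flipAt_iff [Fintype ι] (x : ι → Bool) (i : ι) :
    Even #{j | flipAt x i j = true} ↔ ¬Even #{j | x j = true} := by
  have hrest : ∑ j ∈ univ.erase i, (if flipAt x i j = true then 1 else 0)
      = ∑ j ∈ univ.erase i, (if x j = true then 1 else 0) :=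
    sum_congr rfl fun j hj => by simp_all [flipAt]
  simp only [card_filter, ← add_sum_erase _ _ (mem_univ i), hrest]
  cases hxi : x i <;> simp [flipAt, hxi, parity_simps]

theorem flipAt_induction [Fintype ι] {P : (ι → Bool) → Prop} (x₀ : ι → Bool) (h₀ : P x₀)
    (hstep : ∀ y i, P y → P (flipAt y i)) (y : ι → Bool) : P y := by
  suffices ∀ s : Finset ι, P fun j => if j ∈ s then !x₀ j else x₀ j by
    convert this {j | y j ≠ x₀ j} using 1
    ext j; split_ifs with h <;> simp_all [Bool.eq_not_iff]
  intro s
  induction s using Finset.induction_on with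
  | empty => simpa using h₀
  | insert a s ha ih =>
    convert hstep _ a ih using 1
    ext j; rcases eq_or_ne j a with rfl | hja <;> simp [flipAt, *]

end flipAt

theorem stmt_0 (n : ℕ) (X : Finset (Fin n → Bool)) (hX : X.Nonempty)
    (N : Finset (Fin n → Bool))
    (hN : N = X.biUnion (fun x => Finset.univ.image (fun i => Function.update x i (!(x i)))))
    (hdisj : Disjoint X N) (hcard : N.card ≤ X.card) :
    X = Finset.univ.filter
        (fun x : Fin n → Bool => Even ((Finset.univ.filter (fun i => x i = true)).card)) ∨
    X = Finset.univ.filter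
        (fun x : Fin n → Bool => ¬ Even ((Finset.univ.filter (fun i => x i = true)).card)) := by
  have hXN (i : Fin n) : Set.MapsTo (flipAt · i) X N := fun x hx =>
    hN ▸ mem_biUnion.2 ⟨x, hx, mem_image_of_mem _ (mem_univ i)⟩
  have hNX (i : Fin n) : Set.MapsTo (flipAt · i) N X :=
    (flipAt_involutive i).mapsTo_of_card_le (hXN i) hcard
  obtain ⟨x₀, hx₀⟩ := hX
  set parity : (Fin n → Bool) → Prop := fun x => Even #{i | x i = true}
  have hmem (y : Fin n → Bool) : y ∈ if (parity y ↔ parity x₀) then X else N := by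
    induction y using flipAt_induction x₀ with
    | h₀ => simpa using hx₀
    | hstep y i hy =>
      have hflip : parity (flipAt y i) ↔ ¬parity y := even_card_filter_flipAt_iff y i
      by_cases h : parity y ↔ parity x₀
      · rw [if_pos h] at hy; rw [if_neg (by tauto)]; exact hXN i hy
      · rw [if_neg h] at hy; rw [if_pos (by tauto)]; exact hNX i hy
  have hX_eq : X = univ.filter fun y => parity y ↔ parity x₀ := by
    ext y
    by_cases h : parity y ↔ parity x₀
    · simpa [h] using hmem y
    · have hyN := hmem y
      rw [if_neg h] at hyN
      simp [h, disjoint_right.1 hdisj hyN]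
  by_cases h₀ : parity x₀
  · left; simpa [h₀] using hX_eq
  · right; simpa [parity, h₀] using hX_eq
end

section
/- If the asynchronous state graph of a Boolean network f : {0,1}^V → {0,1}^V has two distinct attractors (terminal strongly connected components), then some subnetwork of f has at least two fixed points. -/
/-- Arc of the asynchronous state graph: `x → x ⊕ e_i` whenever `f_i(x) ≠ x_i`. -/
def asynArc {W : Type*} [DecidableEq W] (f : (W → Bool) → (W → Bool))
    (x y : W → Bool) : Prop :=
  ∃ i, f x i ≠ x i ∧ y = Function.update x i (!(x i))

/-- An attractor is a terminal strongly connected component of the asynchronous state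
graph: a nonempty set, strongly connected, and closed under reachability. -/
def IsAttractor {W : Type*} [DecidableEq W] (f : (W → Bool) → (W → Bool))
    (A : Set (W → Bool)) : Prop :=
  A.Nonempty ∧ (∀ x ∈ A, ∀ y ∈ A, Relation.ReflTransGen (asynArc f) x y) ∧
    (∀ x ∈ A, ∀ y, Relation.ReflTransGen (asynArc f) x y → y ∈ A)

/-- `h` is the subnetwork of `f` induced by fixing the components outside `I` to `z`. -/
def IsSubnetwork {V : Type*} [DecidableEq V] (f : (V → Bool) → (V → Bool)) (I : Finset V)
    (z : {i // i ∉ I} → Bool)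
    (h : ({i // i ∈ I} → Bool) → ({i // i ∈ I} → Bool)) : Prop :=
  I.Nonempty ∧ ∀ y : {i // i ∈ I} → Bool,
    h y = fun j => f (fun v => if hv : v ∈ I then y ⟨v, hv⟩ else z ⟨v, hv⟩) j.1

/-!
Choose `x ∈ A` and `y ∈ B` at minimal Hamming distance and let `I` be the set of coordinates
where they differ. If `f x j ≠ x j` for some `j ∈ I`, the arc `x → x ⊕ e_j` stays in `A` (an
attractor is closed under reachability) and lands closer to `y`; so `x`, and symmetrically `y`,
are fixed on `I`. As `x` and `y` agree off `I`, fixing those coordinates to their common value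
gives a subnetwork with the two distinct fixed points `x|I` and `y|I`.
-/

theorem hammingDist_update_lt {ι : Type*} {β : ι → Type*} [Fintype ι] [DecidableEq ι]
    [∀ i, DecidableEq (β i)] {x y : ∀ i, β i} {j : ι} (hj : x j ≠ y j) :
    hammingDist (Function.update x j (y j)) y < hammingDist x y := by
  refine Finset.card_lt_card (Finset.ssubset_iff_of_subset ?_ |>.mpr ⟨j, by simpa, by simp⟩)
  intro i
  rcases eq_or_ne i j with rfl | hij <;> simp_all

section Attractor

variable {W : Type*} [DecidableEq W] {f : (W → Bool) → (W → Bool)} {A B : Set (W → Bool)}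

theorem IsAttractor.update_mem (hA : IsAttractor f A) {x : W → Bool} (hx : x ∈ A) {i : W}
    (hi : f x i ≠ x i) : Function.update x i (!(x i)) ∈ A :=
  hA.2.2 x hx _ (.single ⟨i, hi, rfl⟩)

theorem IsAttractor.disjoint (hA : IsAttractor f A) (hB : IsAttractor f B) (hAB : A ≠ B) :
    Disjoint A B :=
  Set.disjoint_left.mpr fun w hwA hwB => hAB <| Set.ext fun u =>
    ⟨fun hu => hB.2.2 w hwB u (hA.2.1 w hwA u hu), fun hu => hA.2.2 w hwA u (hB.2.1 w hwB u hu)⟩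

theorem IsAttractor.apply_eq_of_forall_hammingDist_le [Fintype W] (hA : IsAttractor f A)
    {x y : W → Bool} (hx : x ∈ A) (hmin : ∀ x' ∈ A, hammingDist x y ≤ hammingDist x' y)
    {j : W} (hj : x j ≠ y j) : f x j = x j := by
  by_contra hne
  have hcloser := hA.update_mem hx hne
  rw [(Bool.eq_not.mpr hj.symm).symm] at hcloser
  exact (hammingDist_update_lt hj).not_ge (hmin _ hcloser)

end Attractor

section Subnetwork

variable {V : Type*} [DecidableEq V]

def subnetwork (f : (V → Bool) → (V → Bool)) (I : Finset V) (z : {i // i ∉ I} → Bool) :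
    ({i // i ∈ I} → Bool) → ({i // i ∈ I} → Bool) :=
  fun y j => f (fun v => if hv : v ∈ I then y ⟨v, hv⟩ else z ⟨v, hv⟩) j.1

theorem isSubnetwork_subnetwork (f : (V → Bool) → (V → Bool)) {I : Finset V}
    (hI : I.Nonempty) (z : {i // i ∉ I} → Bool) : IsSubnetwork f I z (subnetwork f I z) :=
  ⟨hI, fun _ => rfl⟩

theorem subnetwork_restrict_eq {f : (V → Bool) → (V → Bool)} {I : Finset V}
    {z : {i // i ∉ I} → Bool} {w : V → Bool} (hz : ∀ i, w i.1 = z i)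
    (hw : ∀ i ∈ I, f w i = w i) :
    subnetwork f I z (fun i => w i.1) = fun i => w i.1 := by
  have hglue : (fun v => if hv : v ∈ I then w v else z ⟨v, hv⟩) = w := by
    funext v
    split_ifs with hv
    · rfl
    · exact (hz ⟨v, hv⟩).symm
  funext i
  simp only [subnetwork, hglue]
  exact hw i i.2

end Subnetwork

theorem stmt_2 {V : Type*} [Fintype V] [DecidableEq V]
    (f : (V → Bool) → (V → Bool)) (A B : Set (V → Bool))
    (hA : IsAttractor f A) (hB : IsAttractor f B) (hAB : A ≠ B) :
    ∃ (I : Finset V) (z : {i // i ∉ I} → Bool)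
      (h : ({i // i ∈ I} → Bool) → ({i // i ∈ I} → Bool)),
      IsSubnetwork f I z h ∧ ∃ a b : {i // i ∈ I} → Bool, a ≠ b ∧ h a = a ∧ h b = b := by
  obtain ⟨⟨x, y⟩, ⟨hx, hy⟩, hmin⟩ := (A ×ˢ B).exists_min_image
    (fun p => hammingDist p.1 p.2) (Set.toFinite _) (hA.1.prod hB.1)
  let I : Finset V := {i | x i ≠ y i}
  have hxy : x ≠ y := fun h => (hA.disjoint hB hAB).ne_of_mem hx hy h
  have hI : I.Nonempty := by simpa [I, Finset.filter_nonempty_iff, funext_iff] using hxy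
  have hfx : ∀ i ∈ I, f x i = x i := fun i hi =>
    hA.apply_eq_of_forall_hammingDist_le hx (fun x' hx' => hmin (x', y) ⟨hx', hy⟩)
      (by simpa [I] using hi)
  have hfy : ∀ i ∈ I, f y i = y i := fun i hi =>
    hB.apply_eq_of_forall_hammingDist_le (y := x) hy
      (fun y' hy' => by simpa only [hammingDist_comm] using hmin (x, y') ⟨hx, hy'⟩)
      (by simpa [I, eq_comm] using hi)
  refine ⟨I, fun i => x i, subnetwork f I _, isSubnetwork_subnetwork f hI _,
    fun i => x i, fun i => y i, ?_, subnetwork_restrict_eq (fun _ => rfl) hfx,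
    subnetwork_restrict_eq (fun i => ?_) hfy⟩
  · obtain ⟨i, hi⟩ := hI
    exact fun h => (Finset.mem_filter.mp hi).2 (congrFun h ⟨i, hi⟩)
  · simpa [I, eq_comm] using i.2
end

section
/- If the global interaction graph G(f) of a Boolean network f : {0,1}^V → {0,1}^V has no directed cycle, then f has a unique fixed point. -/
/-- Arc `j → i` in the global interaction graph of `f`. -/
def globalArc {W : Type*} [DecidableEq W] (f : (W → Bool) → (W → Bool)) (j i : W) : Prop :=
  ∃ x, f (Function.update x j true) i ≠ f (Function.update x j false) i

/-- A relation `A` has a directed cycle: distinct vertices `v 0, …, v k` with an arc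
from each to the next, cyclically. -/
def HasCycle {W : Type*} (A : W → W → Prop) : Prop :=
  ∃ (k : ℕ) (v : Fin (k + 1) → W), Function.Injective v ∧ ∀ t, A (v t) (v (t + 1))

/-!
Without directed cycles the arc relation of the finite interaction graph is well-founded.
Since `f x i` only depends on the values of `x` at the in-neighbours of `i`, a fixed point
is then built by well-founded recursion, `x i := f x i`, and any two fixed points agree
at every vertex by well-founded induction.
-/

section Cycles

variable {W : Type*} {A : W → W → Prop}

lemma hasCycle_of_injOn_closed_walk {k : ℕ} {w : ℕ → W} (hinj : Set.InjOn w (Set.Iio (k + 1)))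
    (hclosed : w (k + 1) = w 0) (hw : ∀ t ≤ k, A (w t) (w (t + 1))) : HasCycle A := by
  refine ⟨k, fun t => w t, fun a b hab => Fin.ext (hinj a.isLt b.isLt hab), fun t => ?_⟩
  cases t using Fin.lastCases with
  | last => simpa [hclosed] using hw k le_rfl
  | cast t => simpa [Fin.coeSucc_eq_succ] using hw t t.isLt.le

lemma hasCycle_of_closed_walk {n : ℕ} (hn : 0 < n) {w : ℕ → W} (hclosed : w n = w 0)
    (hw : ∀ t < n, A (w t) (w (t + 1))) : HasCycle A := by
  induction n using Nat.strong_induction_on generalizing w with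
  | _ n ih =>
    by_cases hinj : Set.InjOn w (Set.Iio n)
    · obtain ⟨k, rfl⟩ := Nat.exists_eq_succ_of_ne_zero hn.ne'
      exact hasCycle_of_injOn_closed_walk hinj hclosed fun t ht => hw t (Nat.lt_succ_of_le ht)
    have shorten {a b : ℕ} (hab : a < b) (hbn : b < n) (heq : w a = w b) : HasCycle A :=
      ih (b - a) (by omega) (by omega) (w := fun t => w (a + t))
        (by simpa [Nat.add_sub_cancel' hab.le] using heq.symm)
        fun t ht => by simpa only [← add_assoc] using hw (a + t) (by omega)
    simp only [Set.InjOn, not_forall] at hinj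
    obtain ⟨a, ha, b, hb, heq, hne⟩ := hinj
    rcases Ne.lt_or_gt hne with hab | hba
    · exact shorten hab hb heq
    · exact shorten hba ha heq.symm

lemma wellFounded_of_not_hasCycle [Finite W] (hacyc : ¬ HasCycle A) : WellFounded A := by
  refine wellFounded_iff_isEmpty_descending_chain.mpr ⟨fun ⟨g, hg⟩ => hacyc ?_⟩
  obtain ⟨a, b, hab, heq⟩ := Set.finite_univ.exists_lt_map_eq_of_forall_mem
    (f := g) fun _ => Set.mem_univ _
  refine hasCycle_of_closed_walk (n := b - a) (w := fun t => g (b - t)) (by omega)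
    (by simpa [Nat.sub_sub_self hab.le] using heq) fun t ht => ?_
  simpa [show b - (t + 1) + 1 = b - t by omega] using hg (b - (t + 1))

end Cycles

section FixedPoints

variable {V : Type*} [DecidableEq V] {f : (V → Bool) → (V → Bool)}

lemma apply_update_of_not_globalArc {i j : V} (h : ¬ globalArc f j i) (x : V → Bool) (b : Bool) :
    f (Function.update x j b) i = f x i := by
  have hconst : ∀ z, f (Function.update z j true) i = f (Function.update z j false) i := by
    simpa [globalArc] using h
  conv_rhs => rw [← Function.update_eq_self j x]
  cases b <;> cases x j <;> simp [hconst x]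

lemma apply_piecewise_eq {i : V} {x y : V → Bool} (s : Finset V)
    (h : ∀ j ∈ s, globalArc f j i → x j = y j) : f (s.piecewise y x) i = f x i := by
  induction s using Finset.induction_on with
  | empty => simp
  | @insert a s ha ih =>
    rw [Finset.piecewise_insert]
    by_cases harc : globalArc f a i
    · rw [← h a (Finset.mem_insert_self a s) harc, ← Finset.piecewise_eq_of_notMem s y x ha,
        Function.update_eq_self]
      exact ih fun j hj => h j (Finset.mem_insert_of_mem hj)
    · rw [apply_update_of_not_globalArc harc]
      exact ih fun j hj => h j (Finset.mem_insert_of_mem hj)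

lemma apply_eq_of_eq_on_globalArc [Fintype V] {i : V} {x y : V → Bool}
    (h : ∀ j, globalArc f j i → x j = y j) : f x i = f y i := by
  simpa using (apply_piecewise_eq Finset.univ fun j _ => h j).symm

lemma exists_fixedPoint_of_wellFounded [Fintype V] (hwf : WellFounded (globalArc f)) :
    ∃ x, f x = x := by
  classical
  let x : V → Bool := hwf.fix (C := fun _ => Bool)
    fun i rec => f (fun j => if h : globalArc f j i then rec j h else false) i
  refine ⟨x, funext fun i => ?_⟩
  conv_rhs => rw [show x i = _ from hwf.fix_eq _ i]
  exact apply_eq_of_eq_on_globalArc fun j hj => by rw [dif_pos hj]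

lemma eq_of_fixedPoint_of_wellFounded [Fintype V] (hwf : WellFounded (globalArc f))
    {x y : V → Bool} (hx : f x = x) (hy : f y = y) : x = y :=
  funext fun i => hwf.induction (C := fun i => x i = y i) i fun i ih =>
    calc x i = f x i := (congrFun hx i).symm
      _ = f y i := apply_eq_of_eq_on_globalArc ih
      _ = y i := congrFun hy i

end FixedPoints

/-- Robert's theorem: if the global interaction graph has no directed cycle, then
`f` has a unique fixed point. -/
theorem stmt_5 {V : Type*} [Fintype V] [DecidableEq V]
    (f : (V → Bool) → (V → Bool)) (hacyc : ¬ HasCycle (globalArc f)) :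
    ∃! x : V → Bool, f x = x := by
  have hwf := wellFounded_of_not_hasCycle hacyc
  obtain ⟨x, hx⟩ := exists_fixedPoint_of_wellFounded hwf
  exact ⟨x, hx, fun y hy => eq_of_fixedPoint_of_wellFounded hwf hy hx⟩
end

section
/- If a Boolean network f : {0,1}^V → {0,1}^V has no subnetwork (including f itself) that is even-self-dual or odd-self-dual, then the conjugate map x ↦ f(x) ⊕ x is a bijection of {0,1}^V. -/
/-- The conjugate of `f`: `x ↦ f(x) ⊕ x`. -/
def conjNet {W : Type*} (f : (W → Bool) → (W → Bool)) : (W → Bool) → (W → Bool) :=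
  fun x i => xor (f x i) (x i)

/-- `f` is self-dual: `f(x ⊕ 1) = f(x) ⊕ 1`. -/
def SelfDual {W : Type*} (f : (W → Bool) → (W → Bool)) : Prop :=
  ∀ x, f (fun i => !(x i)) = fun i => !(f x i)

/-- A point has even parity if its number of `true` components is even. -/
def EvenPt {W : Type*} [Fintype W] (x : W → Bool) : Prop :=
  Even ((Finset.univ.filter (fun i => x i = true)).card)

/-- `f` is even: the image of its conjugate is exactly the set of even-parity points. -/
def IsEvenNet {W : Type*} [Fintype W] (f : (W → Bool) → (W → Bool)) : Prop :=
  Set.range (conjNet f) = {x | EvenPt x}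

/-- `f` is odd: the image of its conjugate is exactly the set of odd-parity points. -/
def IsOddNet {W : Type*} [Fintype W] (f : (W → Bool) → (W → Bool)) : Prop :=
  Set.range (conjNet f) = {x | ¬ EvenPt x}

/-!
If `x ↦ f(x) ⊕ x` is not injective, choose `x ≠ y` whose conjugate images agree at every
coordinate where `x` and `y` differ, with the set `I` of such coordinates as small as possible.
Fix the coordinates outside `I` to those of `x`. By minimality, the conjugate `G` of the
resulting subnetwork is rigid: two states whose images agree where they differ are equal or
complementary, and `G(¬x) = G(x)`. Rigidity makes `a ↦ (a j, G(a) off j)` injective, so the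
fibres of `G` over `c` and over `c` with coordinate `j` flipped have sizes summing to `2`.
As the fibre over `G(x)` contains `x` and `¬x`, the fibres have size `2` on the parity class
of `G(x)` and are empty on the other. Hence the image of `G` is a parity class and every state
collides with its complement, which means the subnetwork is self-dual.
-/

open Finset

section

variable {W : Type*}

def diffSet [Fintype W] (a b : W → Bool) : Finset W := univ.filter fun i => a i ≠ b i

def AgreesOnDiff (G : (W → Bool) → (W → Bool)) (a b : W → Bool) : Prop :=
  ∀ i, a i ≠ b i → G a i = G b i

def ComplRigid (G : (W → Bool) → (W → Bool)) : Prop :=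
  ∀ a b, AgreesOnDiff G a b → a = b ∨ b = fun i => !a i

def fiberCard [Fintype W] [DecidableEq W] (G : (W → Bool) → (W → Bool)) (c : W → Bool) : ℕ :=
  #(univ.filter fun a => G a = c)

instance [Fintype W] : DecidablePred (EvenPt : (W → Bool) → Prop) :=
  fun _ => inferInstanceAs (Decidable (Even _))

lemma mem_diffSet [Fintype W] {a b : W → Bool} {i : W} : i ∈ diffSet a b ↔ a i ≠ b i := by
  simp [diffSet]

lemma diffSet_nonempty [Fintype W] {a b : W → Bool} : (diffSet a b).Nonempty ↔ a ≠ b := by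
  simp [Finset.Nonempty, mem_diffSet, funext_iff]

lemma eq_not_of_diffSet_eq_univ [Fintype W] {a b : W → Bool} (h : diffSet a b = univ) :
    b = fun i => !a i :=
  funext fun i => Bool.eq_not.2 (mem_diffSet.1 (h ▸ mem_univ i)).symm

lemma selfDual_iff_conjNet_not {G : (W → Bool) → (W → Bool)} :
    SelfDual G ↔ ∀ a, conjNet G (fun i => !a i) = conjNet G a := by
  simp only [SelfDual, conjNet, funext_iff]
  refine forall_congr' fun a => forall_congr' fun i => ?_
  cases G (fun i => !a i) i <;> cases G a i <;> cases a i <;> simp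

lemma eq_or_eq_update_not_iff [DecidableEq W] {f g : W → Bool} {j : W} :
    (f = g ∨ f = Function.update g j (!g j)) ↔ ∀ i ≠ j, f i = g i := by
  refine ⟨?_, fun h => ?_⟩
  · rintro (rfl | rfl) i hi
    · rfl
    · exact Function.update_of_ne hi _ _
  · by_cases hj : f j = g j
    · exact .inl (funext fun i => if hi : i = j then hi ▸ hj else h i hi)
    · exact .inr (Function.eq_update_iff.2 ⟨Bool.eq_not.2 hj, h⟩)

lemma update_not_ne [DecidableEq W] (c : W → Bool) (j : W) : Function.update c j (!c j) ≠ c :=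
  fun h => by simpa using congrFun h j

lemma eq_ite_evenPt_of_add_update_eq_two [Fintype W] [DecidableEq W] (φ : (W → Bool) → ℕ)
    (hφ : ∀ c j, φ c + φ (Function.update c j (!c j)) = 2) (c : W → Bool) :
    φ c = if EvenPt c then φ (fun _ => false) else 2 - φ (fun _ => false) := by
  have key : ∀ D : Finset W, φ (fun i => decide (i ∈ D)) =
      if Even #D then φ (fun _ => false) else 2 - φ (fun _ => false) := by
    intro D
    induction D using Finset.induction_on with
    | empty => simp
    | insert j D hj ih =>
      have hflip : (fun i => decide (i ∈ insert j D)) =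
          Function.update (fun i => decide (i ∈ D)) j (!decide (j ∈ D)) := by
        funext i
        by_cases hi : i = j
        · simp [hi, hj]
        · simp [hi]
      have h₁ := hφ (fun i => decide (i ∈ D)) j
      have h₂ := hφ (fun _ => false) j
      rw [← hflip] at h₁
      simp only [card_insert_of_notMem hj, Nat.even_add_one]
      split_ifs at ih ⊢ <;> omega
  convert key (univ.filter fun i => c i = true) using 2 <;> simp [EvenPt]

lemma mem_range_iff_fiberCard_ne_zero [Fintype W] [DecidableEq W] {G : (W → Bool) → (W → Bool)}
    {c : W → Bool} : c ∈ Set.range G ↔ fiberCard G c ≠ 0 := by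
  simp [fiberCard]

namespace ComplRigid

variable [Fintype W] [DecidableEq W] {G : (W → Bool) → (W → Bool)}

lemma fiberCard_add_fiberCard_update (hG : ComplRigid G) (c : W → Bool) (j : W) :
    fiberCard G c + fiberCard G (Function.update c j (!c j)) = 2 := by
  set c' := Function.update c j (!c j)
  -- recording `a j` in place of `G a j` loses nothing, by rigidity
  set q : (W → Bool) → (W → Bool) := fun a => Function.update (G a) j (a j)
  have hq : Function.Injective q := by
    intro a b hab
    have hj : a j = b j := by simpa [q] using congrFun hab j
    have hoff : ∀ i ≠ j, G a i = G b i := fun i hi => by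
      simpa [q, Function.update_of_ne hi] using congrFun hab i
    refine (hG a b fun i hi => hoff i ?_).resolve_right fun h => ?_
    · rintro rfl
      exact hi hj
    · rw [h] at hj
      exact Bool.not_ne_self _ hj.symm
  have hfiber : ∀ a, (G a = c ∨ G a = c') ↔ q a ∈ ({c, c'} : Finset _) := by
    intro a
    rw [mem_insert, mem_singleton, eq_or_eq_update_not_iff, eq_or_eq_update_not_iff]
    exact forall₂_congr fun i hi => by simp [q, Function.update_of_ne hi]
  have hdisj : Disjoint (univ.filter fun a => G a = c) (univ.filter fun a => G a = c') :=
    disjoint_filter.2 fun a _ h h' => update_not_ne c j (h ▸ h').symm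
  calc fiberCard G c + fiberCard G c'
      = #(univ.filter fun a => G a = c ∨ G a = c') := by
        rw [filter_or, card_union_of_disjoint hdisj]; rfl
    _ = #({c, c'} : Finset _) := by
        simp_rw [hfiber]
        refine card_nbij q (fun a ha => by simpa using ha) hq.injOn fun d hd => ?_
        obtain ⟨a, rfl⟩ := (Finite.injective_iff_surjective.mp hq) d
        exact ⟨a, by simpa using hd, rfl⟩
    _ = 2 := card_pair (update_not_ne c j).symm

variable [Nonempty W] {a₀ : W → Bool}

lemma fiberCard_eq (hG : ComplRigid G) (h₀ : G (fun i => !a₀ i) = G a₀) (c : W → Bool) :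
    fiberCard G c = if (EvenPt c ↔ EvenPt (G a₀)) then 2 else 0 := by
  obtain ⟨j⟩ := ‹Nonempty W›
  have hstep := hG.fiberCard_add_fiberCard_update
  have hne : a₀ ≠ fun i => !a₀ i := fun h => Bool.not_ne_self (a₀ j) (congrFun h j).symm
  have h₂ : 2 ≤ fiberCard G (G a₀) :=
    calc 2 = #({a₀, fun i => !a₀ i} : Finset _) := (card_pair hne).symm
      _ ≤ fiberCard G (G a₀) := card_le_card fun a ha => by
        rcases mem_insert.1 ha with rfl | ha
        · simp
        · simp [mem_singleton.1 ha, h₀]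
  have hle := hstep (G a₀) j
  have hc := eq_ite_evenPt_of_add_update_eq_two _ hstep c
  have hc₀ := eq_ite_evenPt_of_add_update_eq_two _ hstep (G a₀)
  by_cases he : EvenPt c <;> by_cases he₀ : EvenPt (G a₀) <;>
    simp only [he, he₀, if_true, if_false, iff_self, iff_false, false_iff, not_true]
      at hc hc₀ ⊢ <;> omega

lemma range_eq (hG : ComplRigid G) (h₀ : G (fun i => !a₀ i) = G a₀) :
    Set.range G = {c | EvenPt c ↔ EvenPt (G a₀)} := by
  ext c
  rw [mem_range_iff_fiberCard_ne_zero, hG.fiberCard_eq h₀]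
  split_ifs with h <;> simpa

lemma range_eq_evenPt_or (hG : ComplRigid G) (h₀ : G (fun i => !a₀ i) = G a₀) :
    Set.range G = {c | EvenPt c} ∨ Set.range G = {c | ¬EvenPt c} := by
  rw [hG.range_eq h₀]
  by_cases he₀ : EvenPt (G a₀) <;> simp [he₀]

lemma apply_not (hG : ComplRigid G) (h₀ : G (fun i => !a₀ i) = G a₀) (a : W → Bool) :
    G (fun i => !a i) = G a := by
  have h₂ : fiberCard G (G a) ≠ 0 := mem_range_iff_fiberCard_ne_zero.1 ⟨a, rfl⟩
  have h₂' : 1 < fiberCard G (G a) := by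
    rw [hG.fiberCard_eq h₀] at h₂ ⊢
    split_ifs at h₂ ⊢ <;> simp_all
  obtain ⟨b, hb, hba⟩ := exists_mem_ne h₂' a
  have hb : G b = G a := (mem_filter.1 hb).2
  rcases hG a b fun i _ => by rw [hb] with h | h
  · exact absurd h.symm hba
  · rw [← h, hb]

end ComplRigid

end

section Subnetwork

variable {V : Type*} [DecidableEq V] {I : Finset V} {w : V → Bool}

def extendOutside (I : Finset V) (w : V → Bool) (a : {i // i ∈ I} → Bool) : V → Bool :=
  fun v => if hv : v ∈ I then a ⟨v, hv⟩ else w v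

def subnet (f : (V → Bool) → (V → Bool)) (I : Finset V) (w : V → Bool) :
    ({i // i ∈ I} → Bool) → ({i // i ∈ I} → Bool) :=
  fun a i => f (extendOutside I w a) i

lemma isSubnetwork_subnet (f : (V → Bool) → (V → Bool)) (hI : I.Nonempty) (w : V → Bool) :
    IsSubnetwork f I (fun i => w i) (subnet f I w) :=
  ⟨hI, fun _ => rfl⟩

@[simp]
lemma extendOutside_apply_coe (a : {i // i ∈ I} → Bool) (i : {i // i ∈ I}) :
    extendOutside I w a i = a i :=
  dif_pos i.2

lemma extendOutside_apply_of_notMem (a : {i // i ∈ I} → Bool) {v : V} (hv : v ∉ I) :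
    extendOutside I w a v = w v :=
  dif_neg hv

lemma extendOutside_restrict : extendOutside I w (fun i => w i) = w :=
  funext fun v => by by_cases hv : v ∈ I <;> simp [extendOutside, hv]

lemma extendOutside_diffSet_not [Fintype V] (x y : V → Bool) :
    extendOutside (diffSet x y) x (fun i => !x i) = y := by
  funext v
  by_cases hv : x v = y v
  · simp [extendOutside, mem_diffSet, hv]
  · simp [extendOutside, mem_diffSet, Bool.eq_not.2 (Ne.symm hv)]

lemma conjNet_subnet_apply (f : (V → Bool) → (V → Bool)) (a : {i // i ∈ I} → Bool)
    (i : {i // i ∈ I}) : conjNet (subnet f I w) a i = conjNet f (extendOutside I w a) i := by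
  simp [conjNet, subnet]

lemma diffSet_extendOutside [Fintype V] (a b : {i // i ∈ I} → Bool) :
    diffSet (extendOutside I w a) (extendOutside I w b) =
      (diffSet a b).map (Function.Embedding.subtype _) := by
  ext v
  by_cases hv : v ∈ I
  · simp [mem_diffSet, hv, extendOutside]
  · simp [mem_diffSet, hv, extendOutside_apply_of_notMem]

/-- States of the subnetwork whose images agree where they differ lift to such a pair for `f`
with difference set inside `I`; minimality of `#I` forces that set to be all of `I`. -/
lemma complRigid_conjNet_subnet [Fintype V] (f : (V → Bool) → (V → Bool))
    (hmin : ∀ x y, x ≠ y → AgreesOnDiff (conjNet f) x y → #I ≤ #(diffSet x y)) :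
    ComplRigid (conjNet (subnet f I w)) := by
  intro a b hab
  refine or_iff_not_imp_left.2 fun hne => eq_not_of_diffSet_eq_univ ?_
  have hagree : AgreesOnDiff (conjNet f) (extendOutside I w a) (extendOutside I w b) := by
    intro v hv
    have hvI : v ∈ I := by
      by_contra hvI
      simp [extendOutside_apply_of_notMem _ hvI] at hv
    simpa [conjNet_subnet_apply] using hab ⟨v, hvI⟩ (by simpa [extendOutside, hvI] using hv)
  have hne' : extendOutside I w a ≠ extendOutside I w b :=
    fun h => hne (funext fun i => by simpa using congrFun h i)
  have hcard := hmin _ _ hne' hagree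
  rw [diffSet_extendOutside, card_map] at hcard
  exact eq_univ_of_card _ (le_antisymm (card_le_univ _) (by simpa using hcard))

end Subnetwork

/-- If `f` has no even- or odd-self-dual subnetwork, then its conjugate is a bijection. -/
theorem stmt_7 {V : Type*} [Fintype V] [DecidableEq V]
    (f : (V → Bool) → (V → Bool))
    (hyp : ∀ (I : Finset V) (z : {i // i ∉ I} → Bool)
      (h : ({i // i ∈ I} → Bool) → ({i // i ∈ I} → Bool)),
      IsSubnetwork f I z h → ¬ (SelfDual h ∧ (IsEvenNet h ∨ IsOddNet h))) :
    Function.Bijective (conjNet f) := by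
  refine Finite.injective_iff_bijective.mp fun x₀ y₀ hcoll => by_contra fun hne₀ => ?_
  obtain ⟨⟨x, y⟩, ⟨hne, hxy⟩, hmin⟩ := Set.exists_min_image
    {p : (V → Bool) × (V → Bool) | p.1 ≠ p.2 ∧ AgreesOnDiff (conjNet f) p.1 p.2}
    (fun p => #(diffSet p.1 p.2)) (Set.toFinite _) ⟨(x₀, y₀), hne₀, fun i _ => congrFun hcoll i⟩
  have hI : (diffSet x y).Nonempty := diffSet_nonempty.2 hne
  have : Nonempty {i // i ∈ diffSet x y} := hI.coe_sort
  have hG : ComplRigid (conjNet (subnet f (diffSet x y) x)) :=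
    complRigid_conjNet_subnet f fun x' y' hne' h' => hmin (x', y') ⟨hne', h'⟩
  have h₀ : conjNet (subnet f (diffSet x y) x) (fun i => !x i) =
      conjNet (subnet f (diffSet x y) x) (fun i => x i) := funext fun i => by
    rw [conjNet_subnet_apply, conjNet_subnet_apply, extendOutside_diffSet_not,
      extendOutside_restrict]
    exact (hxy i (mem_diffSet.1 i.2)).symm
  exact hyp _ _ _ (isSubnetwork_subnet f hI x)
    ⟨selfDual_iff_conjNet_not.2 (hG.apply_not h₀), hG.range_eq_evenPt_or h₀⟩
end

section
/- A Boolean network f is positive-circular (its global interaction graph is a positive cycle, i.e., a directed cycle with an even number of negative arcs spanning all vertices, each vertex having in- and out-degree one) if and only if f is even-self-dual and non-expansive. -/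
/-- `f` is non-expansive for the Hamming distance. -/
def NonExpansive {W : Type*} [Fintype W] [DecidableEq W]
    (f : (W → Bool) → (W → Bool)) : Prop :=
  ∀ x y : W → Bool, hammingDist (f x) (f y) ≤ hammingDist x y

/-- Positive arc `j → i` in the global interaction graph of `f`. -/
def globalPos {W : Type*} [DecidableEq W] (f : (W → Bool) → (W → Bool)) (j i : W) : Prop :=
  ∃ x, f (Function.update x j true) i = true ∧ f (Function.update x j false) i = false

/-- Negative arc `j → i` in the global interaction graph of `f`. -/
def globalNeg {W : Type*} [DecidableEq W] (f : (W → Bool) → (W → Bool)) (j i : W) : Prop :=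
  ∃ x, f (Function.update x j true) i = false ∧ f (Function.update x j false) i = true

/-- The global interaction graph of `f` is a directed cycle spanning all vertices
(each vertex has in- and out-degree one): its arcs are exactly the arcs `σ i → i`,
with sign given by `s i` (`true` meaning negative). The permutation `σ` is required
to be a single cycle on all of `W`. -/
def IsCircularWith {W : Type*} [Fintype W] [DecidableEq W]
    (f : (W → Bool) → (W → Bool)) (σ : Equiv.Perm W) (s : W → Bool) : Prop :=
  (∀ i j : W, ∃ n : ℕ, (σ ^ n) i = j) ∧
  (∀ i j : W, globalPos f j i ↔ (j = σ i ∧ s i = false)) ∧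
  (∀ i j : W, globalNeg f j i ↔ (j = σ i ∧ s i = true))

/-- Number of negative arcs of a circular network with signs `s`. -/
def negCount {W : Type*} [Fintype W] (s : W → Bool) : ℕ :=
  (Finset.univ.filter (fun i => s i = true)).card

open Finset Function Equiv

instance : CharP Bool 2 := CharTwo.of_one_ne_zero_of_two_eq_zero (by decide) (by decide)

theorem hammingDist_update_right_add {ι : Type*} [Fintype ι] [DecidableEq ι] {β : ι → Type*}
    [∀ i, DecidableEq (β i)] (x y : ∀ i, β i) (j : ι) (b : β j) :
    hammingDist x (update y j b) + (if x j ≠ y j then 1 else 0) =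
      hammingDist x y + (if x j ≠ b then 1 else 0) := by
  simp only [hammingDist, card_filter]
  rw [Fintype.sum_eq_add_sum_compl j,
    Fintype.sum_eq_add_sum_compl j (fun i => if x i ≠ y i then 1 else 0)]
  have hcompl : ∑ i ∈ {j}ᶜ, (if x i ≠ update y j b i then 1 else 0) =
      ∑ i ∈ {j}ᶜ, if x i ≠ y i then 1 else 0 :=
    sum_congr rfl fun i hi => by rw [update_of_ne (by simpa using hi)]
  simp only [update_self, hcompl]
  omega

section

variable {V : Type*}

def signedShift (σ : Perm V) (s : V → Bool) (x : V → Bool) : V → Bool :=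
  fun i => x (σ i) + s i

theorem selfDual_signedShift (σ : Perm V) (s : V → Bool) : SelfDual (signedShift σ s) := by
  intro x
  funext i
  simp only [signedShift]
  cases x (σ i) <;> cases s i <;> rfl

theorem SelfDual.apply_add_one {f : (V → Bool) → (V → Bool)} (hf : SelfDual f)
    (x : V → Bool) :
    f (x + 1) = f x + 1 := by
  have hnot : ∀ z : V → Bool, z + 1 = fun i => !(z i) := fun z =>
    funext fun i => Bool.xor_true (z i)
  rw [hnot, hnot, hf]

theorem conjNet_signedShift_apply (σ : Perm V) (s x : V → Bool) (i : V) :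
    conjNet (signedShift σ s) x i = x (σ i) + s i + x i := rfl

theorem conjNet_signedShift_zero (σ : Perm V) (s : V → Bool) :
    conjNet (signedShift σ s) 0 = s := by
  funext i
  simp [conjNet_signedShift_apply]

section InteractionGraph

variable [DecidableEq V]

theorem signedShift_update_apply (σ : Perm V) (s x : V → Bool) (j : V) (b : Bool) (i : V) :
    signedShift σ s (update x j b) i = if σ i = j then b + s i else x (σ i) + s i := by
  simp only [signedShift, update_apply]
  split_ifs <;> rfl

theorem globalPos_signedShift_iff (σ : Perm V) (s : V → Bool) (i j : V) :
    globalPos (signedShift σ s) j i ↔ j = σ i ∧ s i = false := by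
  by_cases h : σ i = j
  · subst h
    cases hs : s i <;> simp [globalPos, signedShift_update_apply, hs, Bool.add_eq_xor]
  · simp [globalPos, signedShift_update_apply, h, Ne.symm h]

theorem globalNeg_signedShift_iff (σ : Perm V) (s : V → Bool) (i j : V) :
    globalNeg (signedShift σ s) j i ↔ j = σ i ∧ s i = true := by
  by_cases h : σ i = j
  · subst h
    cases hs : s i <;> simp [globalNeg, signedShift_update_apply, hs, Bool.add_eq_xor]
  · simp [globalNeg, signedShift_update_apply, h, Ne.symm h]

theorem apply_update_eq_of_not_globalPos_of_not_globalNeg {f : (V → Bool) → (V → Bool)}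
    {j i : V} (hpos : ¬ globalPos f j i) (hneg : ¬ globalNeg f j i) (x : V → Bool) (b : Bool) :
    f (update x j b) i = f x i := by
  have hflip : f (update x j true) i = f (update x j false) i := by
    cases h1 : f (update x j true) i <;> cases h0 : f (update x j false) i
    · rfl
    · exact absurd ⟨x, h1, h0⟩ hneg
    · exact absurd ⟨x, h1, h0⟩ hpos
    · rfl
  conv_rhs => rw [← update_eq_self j x]
  cases b <;> cases x j <;> simp only [hflip]

theorem apply_eq_of_forall_update_eq [Fintype V] {α : V → Type*} {β : Type*}
    {g : (∀ i, α i) → β} {j : V} (hg : ∀ k ≠ j, ∀ x b, g (update x k b) = g x)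
    {x y : ∀ i, α i} (hxy : x j = y j) : g x = g y := by
  suffices key : ∀ D : Finset V, j ∉ D →
      ∀ x y : ∀ i, α i, (∀ k ∉ D, x k = y k) → g x = g y from
    key (univ.erase j) (notMem_erase j univ) x y fun k hk => by
      by_cases hkj : k = j
      · exact hkj ▸ hxy
      · exact absurd (mem_erase.2 ⟨hkj, mem_univ k⟩) hk
  intro D
  induction D using Finset.induction_on with
  | empty => exact fun _ x y hxy => congrArg g (funext fun k => hxy k (notMem_empty k))
  | insert k D _ ih =>
    intro hjD x y hxy
    rw [mem_insert, not_or] at hjD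
    rw [← hg k (Ne.symm hjD.1) x (y k)]
    refine ih hjD.2 _ _ fun l hl => ?_
    by_cases hlk : l = k
    · subst hlk; exact update_self ..
    · rw [update_of_ne hlk]; exact hxy l (by simp [hlk, hl])

theorem eq_signedShift_of_arcs [Fintype V] {f : (V → Bool) → (V → Bool)} {σ : Perm V}
    {s : V → Bool} (hpos : ∀ i j, globalPos f j i ↔ j = σ i ∧ s i = false)
    (hneg : ∀ i j, globalNeg f j i ↔ j = σ i ∧ s i = true) :
    f = signedShift σ s := by
  funext x i
  have hdep : ∀ y : V → Bool, y (σ i) = x (σ i) → f y i = f x i := fun y hy =>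
    apply_eq_of_forall_update_eq (g := fun z => f z i) (fun k hk z b =>
      apply_update_eq_of_not_globalPos_of_not_globalNeg (by simp [hpos, hk]) (by simp [hneg, hk])
        z b) hy
  obtain ⟨y, hy⟩ : ∃ y : V → Bool, ∀ b, f (update y (σ i) b) i = b + s i := by
    cases hs : s i
    · obtain ⟨y, h1, h0⟩ := (hpos i (σ i)).2 ⟨rfl, hs⟩
      exact ⟨y, fun b => by cases b <;> assumption⟩
    · obtain ⟨y, h1, h0⟩ := (hneg i (σ i)).2 ⟨rfl, hs⟩
      exact ⟨y, fun b => by cases b <;> assumption⟩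
  rw [← hdep _ (update_self ..), hy]
  rfl

end InteractionGraph

section Parity

variable [Fintype V]

theorem evenPt_iff_sum_eq_zero (x : V → Bool) : EvenPt x ↔ ∑ i, x i = 0 := by
  have hsum : ∑ i, x i = ∑ i, if x i = true then 1 else 0 :=
    sum_congr rfl fun i _ => by cases x i <;> rfl
  rw [EvenPt, hsum, sum_boole, CharP.cast_eq_zero_iff Bool 2, even_iff_two_dvd]

theorem sum_conjNet_signedShift (σ : Perm V) (s x : V → Bool) :
    ∑ i, conjNet (signedShift σ s) x i = ∑ i, s i := by
  simp only [conjNet_signedShift_apply, sum_add_distrib, Equiv.sum_comp σ x]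
  rw [add_comm, ← add_assoc, CharTwo.add_self_eq_zero, zero_add]

theorem sum_eq_zero_of_isEvenNet_signedShift {σ : Perm V} {s : V → Bool}
    (h : IsEvenNet (signedShift σ s)) : ∑ i, s i = 0 := by
  have hs : s ∈ Set.range (conjNet (signedShift σ s)) := ⟨0, conjNet_signedShift_zero σ s⟩
  rw [h] at hs
  exact (evenPt_iff_sum_eq_zero s).1 hs

variable [DecidableEq V]

theorem two_mul_card_filter_sum_eq_zero [Nonempty V] :
    2 * #{x : V → Bool | ∑ i, x i = 0} = Fintype.card (V → Bool) := by
  obtain ⟨i₀⟩ := ‹Nonempty V›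
  have hswap : #{x : V → Bool | ∑ i, x i = 0} = #{x : V → Bool | ¬ ∑ i, x i = 0} := by
    refine card_equiv (Equiv.addRight (Pi.single i₀ 1)) fun x => ?_
    simp only [mem_filter, mem_univ, true_and, Equiv.coe_addRight, Pi.add_apply, sum_add_distrib,
      sum_pi_single', if_true]
    generalize ∑ i, x i = a
    cases a <;> decide
  rw [two_mul, ← card_univ]
  nth_rewrite 2 [hswap]
  exact card_filter_add_card_filter_not _

end Parity

theorem Equiv.Perm.SameCycle.apply_eq_of_forall_apply_perm_eq [Finite V] {σ : Perm V}
    {β : Type*} {z : V → β} (hz : ∀ i, z (σ i) = z i) {i j : V} (h : σ.SameCycle i j) :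
    z i = z j := by
  obtain ⟨n, rfl⟩ := h.exists_nat_pow_eq
  clear h
  induction n with
  | zero => rfl
  | succ n ih => rw [pow_succ', Perm.mul_apply, hz]; exact ih

section Cycle

variable {σ : Perm V} {s : V → Bool}

theorem eq_or_eq_add_one_of_conjNet_signedShift_eq [Finite V] (hσ : ∀ i j, σ.SameCycle i j)
    {x y : V → Bool} (h : conjNet (signedShift σ s) x = conjNet (signedShift σ s) y) :
    y = x ∨ y = x + 1 := by
  have hinv : ∀ i, (x + y) (σ i) = (x + y) i := fun i => by
    have := congrFun h i
    simp only [conjNet_signedShift_apply] at this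
    simp only [Pi.add_apply]
    grind
  rcases isEmpty_or_nonempty V with hV | ⟨⟨i₀⟩⟩
  · exact Or.inl (Subsingleton.elim _ _)
  have hconst : ∀ i, x i + y i = x i₀ + y i₀ := fun i =>
    ((hσ i₀ i).apply_eq_of_forall_apply_perm_eq hinv).symm
  have hy : y = x + fun _ => x i₀ + y i₀ := funext fun i => by
    rw [Pi.add_apply, ← hconst i, ← add_assoc, CharTwo.add_self_eq_zero, zero_add]
  cases hd : x i₀ + y i₀
  · rw [hd] at hy; exact Or.inl (hy.trans (add_zero x))
  · rw [hd] at hy; exact Or.inr hy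

variable [Fintype V] [DecidableEq V]

theorem isEvenNet_signedShift (hσ : ∀ i j, σ.SameCycle i j) (hs : ∑ i, s i = 0) :
    IsEvenNet (signedShift σ s) := by
  rcases isEmpty_or_nonempty V with hV | hV
  · ext y
    simp [EvenPt, Set.mem_range, Subsingleton.elim _ y]
  have hsub :
      univ.image (conjNet (signedShift σ s)) ⊆ ({y | ∑ i, y i = 0} : Finset (V → Bool)) := by
    intro y hy
    obtain ⟨x, -, rfl⟩ := mem_image.1 hy
    simpa [sum_conjNet_signedShift] using hs
  have hfiber : ∀ y ∈ univ.image (conjNet (signedShift σ s)),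
      #{x ∈ univ | conjNet (signedShift σ s) x = y} ≤ 2 := by
    intro y hy
    obtain ⟨x, -, rfl⟩ := mem_image.1 hy
    calc #{x' ∈ univ | conjNet (signedShift σ s) x' = conjNet (signedShift σ s) x}
        ≤ #({x, x + 1} : Finset (V → Bool)) := card_le_card fun x' hx' => by
          rcases eq_or_eq_add_one_of_conjNet_signedShift_eq hσ (mem_filter.1 hx').2.symm
            with rfl | rfl <;> simp
      _ ≤ 2 := card_le_two
  have hcard :
      #{y : V → Bool | ∑ i, y i = 0} ≤ #(univ.image (conjNet (signedShift σ s))) := by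
    have := card_le_mul_card_image univ 2 hfiber
    rw [card_univ, ← two_mul_card_filter_sum_eq_zero] at this
    omega
  ext y
  simpa [evenPt_iff_sum_eq_zero] using congrArg (y ∈ ·) (eq_of_subset_of_card_le hsub hcard)

theorem sameCycle_of_isEvenNet_signedShift (h : IsEvenNet (signedShift σ s)) (i j : V) :
    σ.SameCycle i j := by
  by_contra hij
  set e : V → V → Bool := fun k => Pi.single k 1
  obtain ⟨x, hx⟩ : s + e i + e j ∈ Set.range (conjNet (signedShift σ s)) := by
    rw [h, Set.mem_ofPred_eq, evenPt_iff_sum_eq_zero]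
    simp only [e, Pi.add_apply, sum_add_distrib, sum_pi_single', mem_univ, if_true,
      sum_eq_zero_of_isEvenNet_signedShift h, zero_add, CharTwo.add_self_eq_zero]
  have hstep : ∀ v, x (σ v) + x v = e i v + e j v := fun v => by
    have := congrFun hx v
    simp only [conjNet_signedShift_apply, Pi.add_apply] at this
    grind
  set O : Finset V := {v | σ.SameCycle i v}
  have hO : ∑ v ∈ O, (x (σ v) + x v) = 0 := by
    rw [sum_add_distrib,
      sum_equiv σ (t := O) (fun v => by simp [O, Perm.sameCycle_apply_right]) fun _ _ => rfl]
    exact CharTwo.add_self_eq_zero _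
  have hO' : ∑ v ∈ O, (e i v + e j v) = 1 := by
    simp [e, O, sum_add_distrib, sum_pi_single', hij, Perm.SameCycle.refl]
  simp only [hstep, hO'] at hO
  exact absurd hO (by decide)

end Cycle

section Isometry

variable [Fintype V]

theorem hammingDist_signedShift (σ : Perm V) (s x y : V → Bool) :
    hammingDist (signedShift σ s x) (signedShift σ s y) = hammingDist x y := by
  calc hammingDist (signedShift σ s x) (signedShift σ s y)
      = hammingDist (fun i => x (σ i)) (fun i => y (σ i)) :=
        hammingDist_comp (fun i b => b + s i) fun i => add_left_injective (s i)
    _ = hammingDist x y := card_equiv σ fun i => by simp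

theorem hammingDist_add_hammingDist_add_one (x y : V → Bool) :
    hammingDist x y + hammingDist x (y + 1) = Fintype.card V := by
  have hcompl : (univ.filter fun i => x i ≠ (y + 1) i) = univ.filter fun i => ¬ x i ≠ y i :=
    filter_congr fun i _ => by
      simp only [Pi.add_apply, Pi.one_apply]
      cases x i <;> cases y i <;> decide
  rw [hammingDist, hammingDist, hcompl, card_filter_add_card_filter_not, card_univ]

variable [DecidableEq V]

theorem nonExpansive_signedShift (σ : Perm V) (s : V → Bool) : NonExpansive (signedShift σ s) :=
  fun x y => (hammingDist_signedShift σ s x y).le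

theorem hammingDist_eq_of_selfDual_of_nonExpansive {f : (V → Bool) → (V → Bool)}
    (hsd : SelfDual f) (hne : NonExpansive f) (x y : V → Bool) :
    hammingDist (f x) (f y) = hammingDist x y := by
  have hle := hne x y
  have hle' := hne (x + 1) y
  rw [hsd.apply_add_one, hammingDist_comm (f x + 1), hammingDist_comm (x + 1)] at hle'
  have hf := hammingDist_add_hammingDist_add_one (f y) (f x)
  have hx := hammingDist_add_hammingDist_add_one y x
  rw [hammingDist_comm (f y)] at hf
  rw [hammingDist_comm y] at hx
  omega

theorem apply_eq_true_iff_hammingDist_single_lt (x : V → Bool) (j : V) :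
    x j = true ↔ hammingDist x (Pi.single j 1) < hammingDist x 0 := by
  have h := hammingDist_update_right_add x 0 j 1
  change x j = true ↔ hammingDist x (update 0 j 1) < hammingDist x 0
  cases hx : x j <;> simp [hx] at h ⊢ <;> omega

theorem hammingDist_single_zero (j : V) : hammingDist (Pi.single j 1 : V → Bool) 0 = 1 := by
  have h := hammingDist_update_right_add (0 : V → Bool) 0 j 1
  rw [hammingDist_self, hammingDist_comm] at h
  change hammingDist (update 0 j 1 : V → Bool) 0 = 1
  simpa using h

theorem exists_eq_single_of_hammingDist_zero_eq_one {u : V → Bool} (hu : hammingDist u 0 = 1) :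
    ∃ k, u = Pi.single k 1 := by
  obtain ⟨k, hk⟩ := card_eq_one.1 hu
  refine ⟨k, funext fun l => ?_⟩
  have hl : u l ≠ 0 ↔ l = k := by simpa using congrArg (l ∈ ·) hk
  rw [Pi.single_apply]
  split_ifs with hlk
  · cases hul : u l
    · exact absurd (hl.2 hlk) fun h => h hul
    · rfl
  · cases hul : u l
    · rfl
    · exact absurd (hl.1 (by rw [hul]; decide)) hlk

theorem exists_perm_apply_eq_of_isometry_of_map_zero {h : (V → Bool) → (V → Bool)}
    (hiso : ∀ x y, hammingDist (h x) (h y) = hammingDist x y) (h0 : h 0 = 0) :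
    ∃ τ : Perm V, ∀ x j, h x (τ j) = x j := by
  have hτ : ∀ j, ∃ k, h (Pi.single j 1) = Pi.single k 1 := fun j =>
    exists_eq_single_of_hammingDist_zero_eq_one (by rw [← h0, hiso, hammingDist_single_zero])
  choose τ hτ using hτ
  have hinj : Injective τ := fun a b hab => by
    have hsingle : (Pi.single a 1 : V → Bool) = Pi.single b 1 := by
      rw [← hammingDist_eq_zero, ← hiso, hτ, hτ, hab, hammingDist_self]
    by_contra hne
    have hsa := congrFun hsingle a
    rw [Pi.single_eq_same, Pi.single_eq_of_ne hne] at hsa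
    exact absurd hsa (by decide)
  refine ⟨Equiv.ofBijective τ hinj.bijective_of_finite, fun x j => Bool.eq_iff_iff.2 ?_⟩
  rw [Equiv.ofBijective_apply, apply_eq_true_iff_hammingDist_single_lt, ← hτ, ← h0, hiso, hiso,
    ← apply_eq_true_iff_hammingDist_single_lt]

theorem exists_eq_signedShift_of_isometry {f : (V → Bool) → (V → Bool)}
    (hiso : ∀ x y, hammingDist (f x) (f y) = hammingDist x y) :
    ∃ σ s, f = signedShift σ s := by
  obtain ⟨τ, hτ⟩ := exists_perm_apply_eq_of_isometry_of_map_zero (h := fun x => f x + f 0)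
    (fun x y => (hammingDist_comp (fun i b => b + f 0 i) fun i => add_left_injective _).trans
      (hiso x y))
    (funext fun i => CharTwo.add_self_eq_zero (f 0 i))
  refine ⟨τ.symm, f 0, funext fun x => funext fun i => ?_⟩
  have := hτ x (τ.symm i)
  rw [apply_symm_apply, Pi.add_apply] at this
  rw [signedShift, ← this, add_assoc, CharTwo.add_self_eq_zero, add_zero]

end Isometry

end

/-- `f` is positive-circular (its global interaction graph is a cycle spanning all
vertices with an even number of negative arcs) iff `f` is even-self-dual and
non-expansive. -/
theorem stmt_14 {V : Type*} [Fintype V] [DecidableEq V]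
    (f : (V → Bool) → (V → Bool)) :
    (∃ (σ : Equiv.Perm V) (s : V → Bool), IsCircularWith f σ s ∧ Even (negCount s)) ↔
    (IsEvenNet f ∧ SelfDual f ∧ NonExpansive f) := by
  constructor
  · rintro ⟨σ, s, ⟨hcycle, hpos, hneg⟩, hs⟩
    obtain rfl := eq_signedShift_of_arcs hpos hneg
    have hσ : ∀ i j, σ.SameCycle i j := fun i j =>
      let ⟨n, hn⟩ := hcycle i j
      ⟨n, by rwa [zpow_natCast]⟩
    exact ⟨isEvenNet_signedShift hσ ((evenPt_iff_sum_eq_zero s).1 hs), selfDual_signedShift σ s,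
      nonExpansive_signedShift σ s⟩
  · rintro ⟨heven, hsd, hne⟩
    obtain ⟨σ, s, rfl⟩ :=
      exists_eq_signedShift_of_isometry (hammingDist_eq_of_selfDual_of_nonExpansive hsd hne)
    exact ⟨σ, s, ⟨fun i j => (sameCycle_of_isEvenNet_signedShift heven i j).exists_nat_pow_eq,
      globalPos_signedShift_iff σ s, globalNeg_signedShift_iff σ s⟩,
      (evenPt_iff_sum_eq_zero s).2 (sum_eq_zero_of_isEvenNet_signedShift heven)⟩
end

section
/- If f : {0,1}^V → {0,1}^V is a circular network with permutation σ and constant s, i.e. f(x)_i = x_{σ(i)} ⊕ s_i for all i where σ is a cyclic permutation of V, then f is non-expansive (indeed an isometry for the Hamming distance) and self-dual, and moreover: if s has an even number of ones then the image of f̃(x) = f(x) ⊕ x is exactly the set of even-parity points, while if s has an odd number of ones it is exactly the set of odd-parity points. -/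
/-!
A circular network is `f x = x ∘ σ + s` in the Boolean ring `Bool` (where `+` is `⊕`), so its
conjugate is `x ↦ (x ∘ σ - x) + s`. Reindexing by `σ` and translating by `s` preserve Hamming
distance. Since `σ` is one cycle, the coboundaries `x ∘ σ - x` are exactly the vectors with zero
sum: fix a base point `a` and integrate `g` along the cycle, `x (σ^k a) = ∑_{m<k} g (σ^m a)`,
which is well defined because a full turn adds `∑ g = 0`. Hence the image of the conjugate is the
set of points whose sum, i.e. parity, is that of `s`.
-/

open Finset

theorem hammingDist_comp_equiv {ι κ β : Type*} [Fintype ι] [Fintype κ] [DecidableEq β]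
    (e : κ ≃ ι) (x y : ι → β) : hammingDist (x ∘ e) (y ∘ e) = hammingDist x y :=
  card_equiv e (by simp)

section CycleOn

variable {V G : Type*} [Fintype V] [AddCommGroup G] {σ : Equiv.Perm V}

theorem Equiv.Perm.IsCycleOn.sum_range_card_pow_apply (hσ : σ.IsCycleOn (univ : Finset V))
    (g : V → G) (a : V) : ∑ m ∈ range (Fintype.card V), g ((σ ^ m) a) = ∑ j, g j := by
  refine sum_nbij (fun m => (σ ^ m) a) (fun _ _ => mem_univ _) ?_ ?_ fun _ _ => rfl
  · intro m hm n hn hmn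
    exact ((hσ.pow_apply_eq_pow_apply (mem_univ a)).1 hmn).eq_of_lt_of_lt
      (mem_range.1 hm) (mem_range.1 hn)
  · intro j _
    obtain ⟨n, hn, rfl⟩ := hσ.exists_pow_eq (mem_univ a) (mem_univ j)
    exact ⟨n, mem_coe.2 (mem_range.2 hn), rfl⟩

theorem Equiv.Perm.IsCycleOn.exists_comp_sub_eq (hσ : σ.IsCycleOn (univ : Finset V))
    {g : V → G} (hg : ∑ i, g i = 0) : ∃ x : V → G, x ∘ σ - x = g := by
  rcases isEmpty_or_nonempty V with _ | ⟨⟨a⟩⟩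
  · exact ⟨0, Subsingleton.elim _ _⟩
  let P : ℕ → G := fun k => ∑ m ∈ range k, g ((σ ^ m) a)
  have hN (b : V) : (σ ^ Fintype.card V) b = b := by
    simpa using hσ.pow_card_apply (mem_univ b)
  have hP : Function.Periodic P (Fintype.card V) := fun k => by
    rw [add_comm]
    simp only [P, sum_range_add, hσ.sum_range_card_pow_apply, hg, zero_add, pow_add,
      Equiv.Perm.mul_apply, hN]
  have hP_eq {m n : ℕ} (h : (σ ^ m) a = (σ ^ n) a) : P m = P n := by
    have hmod := (hσ.pow_apply_eq_pow_apply (mem_univ a)).1 h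
    rw [card_univ] at hmod
    rw [← hP.map_mod_nat m, ← hP.map_mod_nat n, hmod]
  choose k hk using fun j => hσ.exists_pow_eq (mem_univ a) (mem_univ j)
  refine ⟨fun j => P (k j), funext fun j => ?_⟩
  have hk_succ : (σ ^ k (σ j)) a = (σ ^ (k j + 1)) a := by
    rw [(hk _).2, pow_succ', Equiv.Perm.mul_apply, (hk j).2]
  simp only [Function.comp_apply, Pi.sub_apply, hP_eq hk_succ, P, sum_range_succ, (hk j).2,
    add_sub_cancel_left]

theorem Equiv.Perm.IsCycleOn.range_comp_sub (hσ : σ.IsCycleOn (univ : Finset V)) :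
    Set.range (fun x : V → G => x ∘ σ - x) = {g | ∑ i, g i = 0} := by
  ext g
  constructor
  · rintro ⟨x, rfl⟩
    simp [sum_sub_distrib, Equiv.sum_comp]
  · exact hσ.exists_comp_sub_eq

end CycleOn

theorem Bool.natCast_eq_false_iff_even (n : ℕ) : (n : Bool) = false ↔ Even n := by
  induction n with
  | zero => simp [Bool.zero_eq_false]
  | succ n ih => rw [Nat.cast_succ, Nat.even_add_one, ← ih]; cases (n : Bool) <;> decide

theorem evenPt_iff_sum_eq_false {W : Type*} [Fintype W] (y : W → Bool) :
    EvenPt y ↔ ∑ i, y i = false := by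
  rw [EvenPt, ← Bool.natCast_eq_false_iff_even, ← sum_boole]
  congr! 3 with i
  cases y i <;> rfl

theorem Equiv.Perm.isCycleOn_univ_of_forall_pow_apply {V : Type*} [Fintype V]
    {σ : Equiv.Perm V} (hσ : ∀ i j : V, ∃ n : ℕ, (σ ^ n) i = j) :
    σ.IsCycleOn (univ : Finset V) := by
  refine ⟨by simp [Set.bijOn_univ], fun i _ j _ => ?_⟩
  obtain ⟨n, hn⟩ := hσ i j
  exact ⟨n, by simpa using hn⟩

section CircularNetwork

variable {V : Type*} {σ : Equiv.Perm V} {s : V → Bool} {f : (V → Bool) → V → Bool}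

theorem hammingDist_circular [Fintype V] (hf : ∀ x i, f x i = xor (x (σ i)) (s i))
    (x y : V → Bool) : hammingDist (f x) (f y) = hammingDist x y := by
  rw [funext (hf x), funext (hf y)]
  exact (hammingDist_comp (fun i b => b + s i) fun i => add_left_injective (s i)).trans
    (hammingDist_comp_equiv σ x y)

theorem selfDual_circular (hf : ∀ x i, f x i = xor (x (σ i)) (s i)) : SelfDual f :=
  fun x => funext fun i => by simp [hf]

theorem conjNet_circular (hf : ∀ x i, f x i = xor (x (σ i)) (s i)) :
    conjNet f = (· + s) ∘ fun x => x ∘ σ - x :=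
  funext fun x => funext fun i => by
    simp only [conjNet, hf, Function.comp_apply, Pi.add_apply, Pi.sub_apply, Bool.add_eq_xor,
      Bool.sub_eq_xor, Bool.xor_right_comm]

theorem range_conjNet_circular [Fintype V] (hf : ∀ x i, f x i = xor (x (σ i)) (s i))
    (hσ : σ.IsCycleOn (univ : Finset V)) :
    Set.range (conjNet f) = {y | ∑ i, y i = ∑ i, s i} := by
  rw [conjNet_circular hf, Set.range_comp, hσ.range_comp_sub]
  ext y
  simp [sum_add_distrib, add_neg_eq_zero]

end CircularNetwork

theorem stmt_16_general {V : Type*} [Fintype V]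
    (σ : Equiv.Perm V) (s : V → Bool)
    (hσ : ∀ i j : V, ∃ n : ℕ, (σ ^ n) i = j)
    (f : (V → Bool) → (V → Bool))
    (hf : ∀ x i, f x i = xor (x (σ i)) (s i)) :
    (∀ x y : V → Bool, hammingDist (f x) (f y) = hammingDist x y) ∧
    SelfDual f ∧
    (Even (negCount s) → Set.range (conjNet f) = {x : V → Bool | EvenPt x}) ∧
    (Odd (negCount s) → Set.range (conjNet f) = {x : V → Bool | ¬ EvenPt x}) := by
  have hrange := range_conjNet_circular hf (Equiv.Perm.isCycleOn_univ_of_forall_pow_apply hσ)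
  refine ⟨hammingDist_circular hf, selfDual_circular hf, fun hs => ?_, fun hs => ?_⟩
  · have hs_sum : ∑ i, s i = false := (evenPt_iff_sum_eq_false s).1 hs
    simp only [hrange, hs_sum, evenPt_iff_sum_eq_false]
  · have hs_sum : ∑ i, s i = true := by
      simpa using mt (evenPt_iff_sum_eq_false s).2 (Nat.not_even_iff_odd.2 hs)
    simp only [hrange, hs_sum, evenPt_iff_sum_eq_false, Bool.not_eq_false]

/-- A circular network `f(x)_i = x_{σ(i)} ⊕ s_i` (with `σ` a single cycle on all of
`V`) is an isometry for the Hamming distance (in particular non-expansive), is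
self-dual, and the image of its conjugate is exactly the even-parity points if `s`
has an even number of ones, and exactly the odd-parity points otherwise. -/
theorem stmt_16 {V : Type*} [Fintype V] [DecidableEq V]
    (σ : Equiv.Perm V) (s : V → Bool)
    (hσ : ∀ i j : V, ∃ n : ℕ, (σ ^ n) i = j)
    (f : (V → Bool) → (V → Bool))
    (hf : ∀ x i, f x i = xor (x (σ i)) (s i)) :
    (∀ x y : V → Bool, hammingDist (f x) (f y) = hammingDist x y) ∧
    SelfDual f ∧
    (Even (negCount s) → Set.range (conjNet f) = {x : V → Bool | EvenPt x}) ∧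
    (Odd (negCount s) → Set.range (conjNet f) = {x : V → Bool | ¬ EvenPt x}) :=
  stmt_16_general σ s hσ f hf
end

section
/- If f : {0,1}^V → {0,1}^V is non-expansive and 2-critical (f has at least two fixed points but every strict subnetwork of f has at most one fixed point), then the global interaction graph of f is a positive cycle spanning all of V. -/
/-!
Two distinct fixed points of a 2-critical network differ in every coordinate, since otherwise they
would give two fixed points of the strict subnetwork on the coordinates where they differ. So the
fixed points of `f` are some `a` and its complement, and conjugating `f` by the translation
`xorShift a` gives a non-expansive `g` whose fixed points are exactly `0` and `1`. Because
`hammingDist 0 y + hammingDist 1 y` is constant, `g` preserves the Hamming norm, and hence is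
monotone. Every `x` with `x j = true` then has `g x (π j) = true` for some `π j`, and the
indicator of a nonempty set `T` with `T ⊆ π '' T` is a fixed point of `g`, so it is `1`. Applied to
the periodic points of `π`, this makes `π` a permutation, and `g x = x ∘ π⁻¹` by comparing norms.
Applied to an orbit of `σ = π⁻¹`, it shows that `σ` is a single cycle. Translating back,
`f x i = x (σ i) ⊕ a i ⊕ a (σ i)`, so the number of negative arcs is `hammingDist a (a ∘ σ)`,
which is even because `a` and `a ∘ σ` have the same norm.
-/

open Finset Function

section Hamming

variable {V : Type*} [Fintype V]

theorem hammingNorm_comp_perm {β : Type*} [Zero β] [DecidableEq β] (x : V → β)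
    (σ : Equiv.Perm V) : hammingNorm (x ∘ σ) = hammingNorm x := by
  simp only [hammingNorm, card_filter]
  exact Equiv.sum_comp σ (fun i => if x i ≠ 0 then 1 else 0)

theorem hammingDist_add_hammingNorm (x y : V → Bool) :
    hammingDist x y + hammingNorm x = hammingNorm y + 2 * #{i | y i < x i} := by
  simp only [hammingDist, hammingNorm, card_filter, mul_sum, ← sum_add_distrib]
  exact sum_congr rfl fun i _ => by cases x i <;> cases y i <;> rfl

theorem hammingDist_add_hammingNorm_of_le {x y : V → Bool} (h : x ≤ y) :
    hammingDist x y + hammingNorm x = hammingNorm y := by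
  have hlt : #{i | y i < x i} = 0 :=
    card_eq_zero.mpr (filter_eq_empty_iff.mpr fun i _ => (h i).not_gt)
  simpa [hlt] using hammingDist_add_hammingNorm x y

theorem eq_of_le_of_hammingNorm_le {x y : V → Bool} (h : x ≤ y)
    (hn : hammingNorm y ≤ hammingNorm x) : x = y :=
  hammingDist_eq_zero.mp (by have := hammingDist_add_hammingNorm_of_le h; omega)

theorem even_hammingDist_of_hammingNorm_eq {x y : V → Bool}
    (h : hammingNorm x = hammingNorm y) : Even (hammingDist x y) :=
  ⟨#{i | y i < x i}, by have := hammingDist_add_hammingNorm x y; omega⟩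

theorem hammingDist_add_hammingDist_of_forall_ne {a b : V → Bool} (hab : ∀ i, a i ≠ b i)
    (x : V → Bool) : hammingDist a x + hammingDist b x = Fintype.card V := by
  simp only [hammingDist, card_filter, ← sum_add_distrib]
  rw [← card_univ, card_eq_sum_ones]
  refine sum_congr rfl fun i _ => ?_
  have := hab i
  revert this
  cases a i <;> cases b i <;> cases x i <;> simp

theorem even_negCount_xor_comp_perm (a : V → Bool) (σ : Equiv.Perm V) :
    Even (negCount fun i => xor (a i) (a (σ i))) := by
  have : negCount (fun i => xor (a i) (a (σ i))) = hammingDist a (a ∘ σ) := by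
    simp [negCount, hammingDist]
  rw [this]
  exact even_hammingDist_of_hammingNorm_eq (hammingNorm_comp_perm a σ).symm

end Hamming

section XorShift

variable {V : Type*}

def xorShift (a x : V → Bool) : V → Bool := fun i => xor (a i) (x i)

theorem xorShift_xorShift (a x : V → Bool) : xorShift a (xorShift a x) = x := by
  funext i; simp [xorShift]

theorem xorShift_eq_iff {a x y : V → Bool} : xorShift a x = y ↔ x = xorShift a y := by
  constructor <;> rintro rfl <;> rw [xorShift_xorShift]

theorem xorShift_self (a : V → Bool) : xorShift a a = 0 := by
  funext i; simp [xorShift]; rfl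

theorem xorShift_eq_one_of_forall_ne {a b : V → Bool} (hab : ∀ i, a i ≠ b i) :
    xorShift a b = 1 := by
  funext i
  show xor (a i) (b i) = true
  have := hab i
  revert this
  cases a i <;> cases b i <;> decide

theorem hammingDist_xorShift [Fintype V] (a x y : V → Bool) :
    hammingDist (xorShift a x) (xorShift a y) = hammingDist x y :=
  hammingDist_comp (fun i => xor (a i)) fun _ _ _ => Bool.xor_right_inj.mp

theorem xorShift_conj_fixed_iff {f : (V → Bool) → (V → Bool)} {a b : V → Bool}
    (hab : ∀ i, a i ≠ b i) (hfix : ∀ c, f c = c ↔ c = a ∨ c = b) (y : V → Bool) :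
    xorShift a (f (xorShift a y)) = y ↔ y = 0 ∨ y = 1 := by
  rw [xorShift_eq_iff, hfix, xorShift_eq_iff, xorShift_eq_iff, xorShift_self,
    xorShift_eq_one_of_forall_ne hab]

theorem apply_eq_xor_of_xorShift_conj_eq_comp {f : (V → Bool) → (V → Bool)} {a : V → Bool}
    {σ : Equiv.Perm V} (hσ : ∀ x, xorShift a (f (xorShift a x)) = x ∘ σ) (x : V → Bool) (i : V) :
    f x i = xor (x (σ i)) (xor (a i) (a (σ i))) := by
  have h := xorShift_eq_iff.mp (hσ (xorShift a x))
  rw [xorShift_xorShift] at h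
  simp only [h, xorShift, comp_apply]
  cases a i <;> cases a (σ i) <;> cases x (σ i) <;> rfl

end XorShift

namespace NonExpansive

variable {V : Type*} [Fintype V] [DecidableEq V] {f : (V → Bool) → (V → Bool)}

theorem hammingNorm_map (hf : NonExpansive f) (h0 : f 0 = 0) (h1 : f 1 = 1)
    (x : V → Bool) : hammingNorm (f x) = hammingNorm x := by
  have hsum := hammingDist_add_hammingDist_of_forall_ne (a := (0 : V → Bool)) (b := 1)
    fun _ => Bool.false_ne_true
  have h0x : hammingDist 0 (f x) ≤ hammingDist 0 x := by simpa [h0] using hf 0 x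
  have h1x : hammingDist 1 (f x) ≤ hammingDist 1 x := by simpa [h1] using hf 1 x
  have := hsum x
  have := hsum (f x)
  rw [← hammingDist_zero_left]
  omega

/-- For `x ≤ y`, `hammingDist (f x) (f y) ≤ hammingNorm y - hammingNorm x` leaves no room for a
coordinate with `f y i < f x i`, each of which costs `2` in `hammingDist_add_hammingNorm`. -/
theorem monotone (hf : NonExpansive f) (hn : ∀ x, hammingNorm (f x) = hammingNorm x) :
    Monotone f := by
  intro x y hxy
  have hd := hf x y
  have hxy' := hammingDist_add_hammingNorm_of_le hxy
  have hfxy := hammingDist_add_hammingNorm (f x) (f y)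
  rw [hn, hn] at hfxy
  have hlt : #{i | f y i < f x i} = 0 := by omega
  rw [card_eq_zero, filter_eq_empty_iff] at hlt
  exact fun i => not_lt.mp (hlt (mem_univ i))

theorem xorShift_conj (hf : NonExpansive f) (a : V → Bool) :
    NonExpansive fun x => xorShift a (f (xorShift a x)) := by
  intro x y
  rw [hammingDist_xorShift, ← hammingDist_xorShift a x y]
  exact hf _ _

end NonExpansive

theorem Function.periodicPts_nonempty {α : Type*} [Finite α] [Nonempty α] (f : α → α) :
    (periodicPts f).Nonempty := by
  obtain ⟨m, n, hmn, heq⟩ :=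
    Finite.exists_ne_map_eq_of_infinite fun n => f^[n] (Classical.arbitrary α)
  wlog h : m < n generalizing m n
  · exact this n m hmn.symm heq.symm (by omega)
  refine ⟨f^[m] (Classical.arbitrary α), mk_mem_periodicPts (n := n - m) (by omega) ?_⟩
  change f^[n - m] (f^[m] _) = _
  rw [← iterate_add_apply, Nat.sub_add_cancel h.le]
  exact heq.symm

section FixedPointsZeroOne

variable {V : Type*} [Fintype V] {g : (V → Bool) → (V → Bool)}

theorem eq_one_of_forall_exists_preimage (hn : ∀ x, hammingNorm (g x) = hammingNorm x)
    (hfix : ∀ y, g y = y → y = 0 ∨ y = 1) {π : V → V}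
    (hπ : ∀ j x, x j = true → g x (π j) = true) {y : V → Bool} (hy0 : y ≠ 0)
    (hy : ∀ i, y i = true → ∃ j, y j = true ∧ π j = i) : y = 1 := by
  have hle : y ≤ g y := by
    intro i
    cases hi : y i
    · exact Bool.false_le _
    · obtain ⟨j, hj, rfl⟩ := hy i hi
      exact (hπ j y hj).ge
  exact (hfix y (eq_of_le_of_hammingNorm_le hle (hn y).le).symm).resolve_left hy0

theorem exists_forall_apply_eq_true [DecidableEq V] (hmono : Monotone g)
    (hn : ∀ x, hammingNorm (g x) = hammingNorm x) (j : V) :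
    ∃ m, ∀ x, x j = true → g x m = true := by
  set e := update (0 : V → Bool) j true
  have he : g e ≠ 0 := by
    rw [← hammingNorm_ne_zero_iff, hn, hammingNorm_ne_zero_iff]
    exact ne_of_apply_ne (· j) (by simp [e])
  obtain ⟨m, hm⟩ := Function.ne_iff.mp he
  refine ⟨m, fun x hx => ?_⟩
  have hle : e ≤ x := update_le_iff.mpr ⟨hx.ge, fun _ _ => Bool.false_le _⟩
  have hm' : g e m = true := by simpa [Bool.zero_eq_false] using hm
  exact Bool.eq_true_of_true_le (hm' ▸ hmono hle m)

theorem exists_perm_of_fixedPoints [DecidableEq V] (hg : NonExpansive g)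
    (hfix : ∀ y, g y = y ↔ y = 0 ∨ y = 1) : ∃ σ : Equiv.Perm V, ∀ x, g x = x ∘ σ := by
  have hn := hg.hammingNorm_map ((hfix 0).mpr (.inl rfl)) ((hfix 1).mpr (.inr rfl))
  choose π hπ using exists_forall_apply_eq_true (hg.monotone hn) hn
  have hπinj : Injective π := by
    classical
    refine injective_iff_periodicPts_eq_univ.mpr (Set.eq_univ_of_forall fun i => ?_)
    have : Nonempty V := ⟨i⟩
    have h := eq_one_of_forall_exists_preimage hn (fun y => (hfix y).mp) hπ
      (y := fun v => decide (v ∈ periodicPts π)) ?_ ?_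
    · simpa [Bool.one_eq_true] using congrFun h i
    · obtain ⟨v, hv⟩ := periodicPts_nonempty π
      exact ne_of_apply_ne (· v) (by simp [hv])
    · intro v hv
      obtain ⟨j, hj, rfl⟩ := (bijOn_periodicPts π).surjOn (by simpa using hv)
      exact ⟨j, by simpa using hj, rfl⟩
  set e := Equiv.ofBijective π hπinj.bijective_of_finite
  refine ⟨e.symm, fun x => (eq_of_le_of_hammingNorm_le (fun i => ?_) ?_).symm⟩
  · change x (e.symm i) ≤ g x i
    cases hx : x (e.symm i)
    · exact Bool.false_le _
    · have := hπ _ x hx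
      rw [show π (e.symm i) = i from e.apply_symm_apply i] at this
      exact this.ge
  · rw [hn, hammingNorm_comp_perm]

theorem exists_pow_apply_eq_of_fixedPoints (hfix : ∀ y, g y = y → y = 0 ∨ y = 1)
    {σ : Equiv.Perm V} (hσ : ∀ x, g x = x ∘ σ) (i j : V) : ∃ n : ℕ, (σ ^ n) i = j := by
  classical
  have h := eq_one_of_forall_exists_preimage (fun x => by rw [hσ, hammingNorm_comp_perm]) hfix
    (π := σ.symm) (fun j x hx => by simpa [hσ] using hx)
    (y := fun v => decide (σ.SameCycle i v)) ?_ ?_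
  · exact (by simpa [Bool.one_eq_true] using congrFun h j : σ.SameCycle i j).exists_nat_pow_eq
  · exact ne_of_apply_ne (· i) (by simpa [Bool.zero_eq_false] using .refl σ i)
  · intro v hv
    exact ⟨σ v, by simpa [Equiv.Perm.sameCycle_apply_right] using hv, σ.symm_apply_apply v⟩

end FixedPointsZeroOne

section Network

variable {V : Type*} [Fintype V] [DecidableEq V] {f : (V → Bool) → (V → Bool)}

def StrictSubnetworksHaveAtMostOneFixedPt (f : (V → Bool) → (V → Bool)) : Prop :=
  ∀ (I : Finset V) (z : {i // i ∉ I} → Bool)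
    (h : ({i // i ∈ I} → Bool) → ({i // i ∈ I} → Bool)),
    IsSubnetwork f I z h → I ≠ Finset.univ →
    ∀ a b : {i // i ∈ I} → Bool, h a = a → h b = b → a = b

namespace StrictSubnetworksHaveAtMostOneFixedPt

/-- Otherwise `x` and `y` restrict to two fixed points of the strict subnetwork on the set where
they differ, with the common values frozen outside it. -/
theorem apply_ne (hf : StrictSubnetworksHaveAtMostOneFixedPt f) {x y : V → Bool}
    (hx : f x = x) (hy : f y = y) (hxy : x ≠ y) (v : V) : x v ≠ y v := by
  intro hv
  set I : Finset V := {w | x w ≠ y w}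
  set h : ({i // i ∈ I} → Bool) → ({i // i ∈ I} → Bool) :=
    fun u j => f (fun w => if hw : w ∈ I then u ⟨w, hw⟩ else x w) j.1
  have hrestrict : ∀ u, f u = u → (∀ w ∉ I, x w = u w) → h (fun j => u j.1) = fun j => u j.1 := by
    intro u hu hxu
    have hglue : (fun w => if hw : w ∈ I then u w else x w) = u :=
      funext fun w => by by_cases hw : w ∈ I <;> simp [hw, hxu]
    funext j
    simp only [h, hglue, hu]
  obtain ⟨w, hw⟩ := Function.ne_iff.mp hxy
  have hwI : w ∈ I := by simpa [I] using hw
  have hvI : v ∉ I := by simpa [I] using hv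
  have hsub : IsSubnetwork f I (fun i => x i.1) h := ⟨⟨w, hwI⟩, fun _ => rfl⟩
  have heq := hf I _ h hsub (fun hI => hvI (hI ▸ mem_univ v)) (fun j => x j.1) (fun j => y j.1)
    (hrestrict x hx fun _ _ => rfl) (hrestrict y hy fun w hw => by simpa [I] using hw)
  exact hw (congrFun heq ⟨w, hwI⟩)

theorem fixed_iff (hf : StrictSubnetworksHaveAtMostOneFixedPt f) {a b : V → Bool} (hab : a ≠ b)
    (ha : f a = a) (hb : f b = b) (c : V → Bool) : f c = c ↔ c = a ∨ c = b := by
  refine ⟨fun hc => ?_, by rintro (rfl | rfl) <;> assumption⟩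
  by_contra! hcab
  obtain ⟨v, hv⟩ := Function.ne_iff.mp hcab.1
  have hca := hf.apply_ne hc ha hcab.1 v
  have hcb := hf.apply_ne hc hb hcab.2 v
  have hab := hf.apply_ne ha hb hab v
  revert hca hcb hab
  cases c v <;> cases a v <;> cases b v <;> decide

end StrictSubnetworksHaveAtMostOneFixedPt

theorem isCircularWith_of_apply_eq_xor {σ : Equiv.Perm V} {s : V → Bool}
    (hcyc : ∀ i j : V, ∃ n : ℕ, (σ ^ n) i = j) (hf : ∀ x i, f x i = xor (x (σ i)) (s i)) :
    IsCircularWith f σ s := by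
  refine ⟨hcyc, fun i j => ?_, fun i j => ?_⟩ <;>
  · by_cases hj : j = σ i
    · subst hj
      cases hs : s i <;> simp [globalPos, globalNeg, hf, hs]
    · simp [globalPos, globalNeg, hf, update_of_ne (Ne.symm hj), hj]

end Network

/-- If `f` is non-expansive and 2-critical (it has at least two fixed points but every
strict subnetwork has at most one fixed point), then the global interaction graph of
`f` is a positive cycle spanning all vertices. -/
theorem stmt_17 {V : Type*} [Fintype V] [DecidableEq V]
    (f : (V → Bool) → (V → Bool))
    (hne : NonExpansive f)
    (hfix : ∃ a b : V → Bool, a ≠ b ∧ f a = a ∧ f b = b)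
    (hcrit : ∀ (I : Finset V) (z : {i // i ∉ I} → Bool)
      (h : ({i // i ∈ I} → Bool) → ({i // i ∈ I} → Bool)),
      IsSubnetwork f I z h → I ≠ Finset.univ →
      ∀ a b : {i // i ∈ I} → Bool, h a = a → h b = b → a = b) :
    ∃ (σ : Equiv.Perm V) (s : V → Bool), IsCircularWith f σ s ∧ Even (negCount s) := by
  obtain ⟨a, b, hab, hfa, hfb⟩ := hfix
  have hcrit : StrictSubnetworksHaveAtMostOneFixedPt f := hcrit
  have hfixg := xorShift_conj_fixed_iff (hcrit.apply_ne hfa hfb hab) (hcrit.fixed_iff hab hfa hfb)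
  obtain ⟨σ, hσ⟩ := exists_perm_of_fixedPoints (hne.xorShift_conj a) hfixg
  exact ⟨σ, _, isCircularWith_of_apply_eq_xor
    (exists_pow_apply_eq_of_fixedPoints (fun y => (hfixg y).mp) hσ)
    (apply_eq_xor_of_xorShift_conj_eq_comp hσ), even_negCount_xor_comp_perm a σ⟩
end

section
/- If f is an and-net (conjunctive Boolean network) and is even-self-dual or odd-self-dual, then its global interaction graph G(f) is a single cycle spanning all vertices; the cycle is positive if f is even and negative if f is odd. -/
/-- `f` is an and-net: there is a simple signed digraph on `V` such that each `f_i`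
is the conjunction of its positive inputs and negated negative inputs. -/
def IsAndNet {W : Type*} (f : (W → Bool) → (W → Bool)) : Prop :=
  ∃ pos neg : W → W → Prop, (∀ j i, ¬ (pos j i ∧ neg j i)) ∧
    ∀ x i, f x i = true ↔ (∀ j, pos j i → x j = true) ∧ (∀ j, neg j i → x j = false)


/-!
Self-duality forces every conjunction `f i` to be a single literal: with two literals one can
falsify one of them at `x` and the other at `¬x`. So `f x i = x (τ i) ⊕ s i`, and the conjugate
`x ↦ s ⊕ x ⊕ x ∘ τ` is affine. Its image is a whole parity class. If `j ∉ range τ`, the points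
`0` and `δ_j` are sent to points of different parity, so `τ` is a permutation. Then on every
`τ`-invariant set `S` the parity of `x ⊕ x ∘ τ` vanishes, so the image has constant parity on `S`;
but flipping one coordinate inside `S` and one outside it stays in the parity class, so `S`
is everything: `τ` is a single cycle. Its sign is the parity of `s = f̃ 0`.
-/

open Finset

section

variable {W : Type*} {f : (W → Bool) → (W → Bool)} {τ : W → W} {s : W → Bool}

def parityOn (S : Finset W) (x : W → Bool) : ZMod 2 :=
  ∑ i ∈ S, if x i then 1 else 0

lemma parityOn_xor (S : Finset W) (x y : W → Bool) :
    parityOn S (fun i => xor (x i) (y i)) = parityOn S x + parityOn S y := by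
  rw [parityOn, parityOn, parityOn, ← sum_add_distrib]
  refine sum_congr rfl fun i _ => ?_
  cases x i <;> cases y i <;> decide

lemma parityOn_comp_perm {S : Finset W} {σ : Equiv.Perm W} (hS : ∀ v, σ v ∈ S ↔ v ∈ S)
    (x : W → Bool) : parityOn S (x ∘ σ) = parityOn S x :=
  sum_equiv σ (fun v => (hS v).symm) fun _ _ => rfl

lemma parityOn_decide_eq [DecidableEq W] (S : Finset W) (a : W) :
    parityOn S (fun v => decide (v = a)) = if a ∈ S then 1 else 0 := by
  simp only [parityOn, decide_eq_true_eq]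
  exact sum_ite_eq' S a fun _ => 1

lemma exists_eq_xor_of_conj_of_selfDual {pos neg : W → Prop} (hdisj : ∀ j, ¬(pos j ∧ neg j))
    {g : (W → Bool) → Bool}
    (hg : ∀ x, g x = true ↔ (∀ j, pos j → x j = true) ∧ (∀ j, neg j → x j = false))
    (hsd : ∀ x, g (fun j => !x j) = !g x) : ∃ j b, ∀ x, g x = xor (x j) b := by
  classical
  set r : W → Bool := fun j => decide (pos j)
  have hg' : ∀ x, g x = true ↔ ∀ j, pos j ∨ neg j → x j = r j := by
    refine fun x => (hg x).trans
      ⟨fun ⟨hp, hn⟩ j hj => ?_, fun h => ⟨fun j hp => ?_, fun j hn => ?_⟩⟩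
    · by_cases hpj : pos j
      · simp [r, hpj, hp j hpj]
      · simp [r, hpj, hn j (hj.resolve_left hpj)]
    · simpa [r, hp] using h j (.inl hp)
    · have hnp : ¬pos j := fun hp => hdisj j ⟨hp, hn⟩
      simpa [r, hnp] using h j (.inr hn)
  obtain ⟨j, hj⟩ : ∃ j, pos j ∨ neg j := by
    by_contra! h
    have htrue : ∀ x, g x = true := fun x => (hg' x).2 fun j hj => (hj.elim (h j).1 (h j).2).elim
    simpa [htrue] using hsd fun _ => false
  have hunique : ∀ k, pos k ∨ neg k → k = j := by
    intro k hk
    by_contra hkj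
    -- `x` violates the literal at `k`, and `¬x` violates the one at `j`.
    set x := Function.update r k (!r k)
    have hx : g x = false := by
      rw [← Bool.not_eq_true, hg']
      exact fun h => by simpa [x] using h k hk
    have hnx : g (fun v => !x v) = false := by
      rw [← Bool.not_eq_true, hg']
      exact fun h => by simpa [x, Ne.symm hkj] using h j hj
    simp [hsd, hx] at hnx
  refine ⟨j, !r j, fun x => ?_⟩
  have : g x = true ↔ x j = r j :=
    (hg' x).trans ⟨fun h => h j hj, fun h k hk => hunique k hk ▸ h⟩
  refine Bool.eq_iff_iff.2 (this.trans ?_)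
  cases x j <;> cases r j <;> decide

lemma IsAndNet.exists_eq_xor_of_selfDual (hand : IsAndNet f) (hsd : SelfDual f) :
    ∃ (τ : W → W) (s : W → Bool), ∀ x i, f x i = xor (x (τ i)) (s i) := by
  obtain ⟨pos, neg, hdisj, hspec⟩ := hand
  have h : ∀ i, ∃ j b, ∀ x, f x i = xor (x j) b := fun i =>
    exists_eq_xor_of_conj_of_selfDual (fun j => hdisj j i) (fun x => hspec x i)
      fun x => congrFun (hsd x) i
  choose τ s hτs using h
  exact ⟨τ, s, fun x i => hτs i x⟩

lemma conjNet_eq_of_eq_xor (hf : ∀ x i, f x i = xor (x (τ i)) (s i)) (x : W → Bool) :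
    conjNet f x = fun i => xor (xor (x (τ i)) (s i)) (x i) := by
  funext i
  simp only [conjNet, hf]

lemma conjNet_false_of_eq_xor (hf : ∀ x i, f x i = xor (x (τ i)) (s i)) :
    conjNet f (fun _ => false) = s := by
  simp [conjNet_eq_of_eq_xor hf]

lemma globalPos_iff_of_eq_xor [DecidableEq W] (hf : ∀ x i, f x i = xor (x (τ i)) (s i))
    (i j : W) : globalPos f j i ↔ j = τ i ∧ s i = false := by
  by_cases hji : j = τ i
  · subst hji
    simp only [globalPos, hf, Function.update_self, true_and]
    constructor
    · rintro ⟨_, h, _⟩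
      simpa using h
    · intro hs
      exact ⟨fun _ => false, by simp [hs]⟩
  · simp [globalPos, hf, Function.update_of_ne (Ne.symm hji), hji]

lemma globalNeg_iff_of_eq_xor [DecidableEq W] (hf : ∀ x i, f x i = xor (x (τ i)) (s i))
    (i j : W) : globalNeg f j i ↔ j = τ i ∧ s i = true := by
  by_cases hji : j = τ i
  · subst hji
    simp only [globalNeg, hf, Function.update_self, true_and]
    constructor
    · rintro ⟨_, h, _⟩
      simpa using h
    · intro hs
      exact ⟨fun _ => false, by simp [hs]⟩
  · simp [globalNeg, hf, Function.update_of_ne (Ne.symm hji), hji]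

variable [Fintype W]

lemma evenPt_iff_parityOn (x : W → Bool) : EvenPt x ↔ parityOn univ x = 0 := by
  rw [EvenPt, parityOn, sum_boole, ZMod.natCast_eq_zero_iff, even_iff_two_dvd]

lemma exists_range_conjNet_eq_parity (heo : IsEvenNet f ∨ IsOddNet f) :
    ∃ c, Set.range (conjNet f) = {z | parityOn univ z = c} := by
  rcases heo with he | ho
  · exact ⟨0, he.trans (Set.ext fun z => evenPt_iff_parityOn z)⟩
  · refine ⟨1, ho.trans (Set.ext fun z => ?_)⟩
    have h01 : ∀ a : ZMod 2, a ≠ 0 ↔ a = 1 := by decide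
    exact (not_congr (evenPt_iff_parityOn z)).trans (h01 _)

lemma parityOn_conjNet_of_range_eq {c : ZMod 2}
    (hc : Set.range (conjNet f) = {z | parityOn univ z = c}) (x : W → Bool) :
    parityOn univ (conjNet f x) = c := by
  have hx := Set.mem_range_self (f := conjNet f) x
  rwa [hc] at hx

variable [DecidableEq W]

lemma surjective_of_range_conjNet_eq_parity (hf : ∀ x i, f x i = xor (x (τ i)) (s i)) {c : ZMod 2}
    (hc : Set.range (conjNet f) = {z | parityOn univ z = c}) : Function.Surjective τ := by
  intro j
  by_contra! hj
  have hδ := parityOn_conjNet_of_range_eq hc fun v => decide (v = j)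
  have h0 := parityOn_conjNet_of_range_eq hc fun _ => false
  rw [conjNet_eq_of_eq_xor hf, parityOn_xor, parityOn_xor, parityOn_decide_eq] at hδ
  rw [conjNet_false_of_eq_xor hf] at h0
  have hzero : parityOn univ (fun i => decide (τ i = j)) = 0 := by simp [parityOn, hj]
  simp [hzero, h0] at hδ

lemma sameCycle_of_range_conjNet_eq_parity {σ : Equiv.Perm W}
    (hf : ∀ x i, f x i = xor (x (σ i)) (s i)) {c : ZMod 2}
    (hc : Set.range (conjNet f) = {z | parityOn univ z = c}) (i j : W) : σ.SameCycle i j := by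
  by_contra hij
  set S := univ.filter (σ.SameCycle i)
  have hS : ∀ v, σ v ∈ S ↔ v ∈ S := by simp [S]
  have hiS : i ∈ S := mem_filter.2 ⟨mem_univ i, .refl σ i⟩
  have hjS : j ∉ S := by simpa [S] using hij
  have hrange : ∀ x, parityOn S (conjNet f x) = parityOn S s := fun x => by
    have hcomp : parityOn S (fun v => x (σ v)) = parityOn S x := parityOn_comp_perm hS x
    rw [conjNet_eq_of_eq_xor hf, parityOn_xor, parityOn_xor, hcomp, add_right_comm,
      CharTwo.add_self_eq_zero, zero_add]
  set z : W → Bool := fun v => xor (s v) (xor (decide (v = i)) (decide (v = j)))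
  have hz : z ∈ Set.range (conjNet f) := by
    rw [hc]
    show parityOn univ z = c
    rw [parityOn_xor, parityOn_xor, parityOn_decide_eq, parityOn_decide_eq,
      ← conjNet_false_of_eq_xor hf, parityOn_conjNet_of_range_eq hc]
    simp [CharTwo.add_self_eq_zero]
  obtain ⟨x, hx⟩ := hz
  have hpar := hrange x
  rw [hx, parityOn_xor, parityOn_xor, parityOn_decide_eq, parityOn_decide_eq, if_pos hiS,
    if_neg hjS, add_zero] at hpar
  simp at hpar

end

/-- If `f` is an and-net which is even-self-dual or odd-self-dual, then its global
interaction graph is a single cycle spanning all vertices, positive if `f` is even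
and negative if `f` is odd. -/
theorem stmt_18 {V : Type*} [Fintype V] [DecidableEq V]
    (f : (V → Bool) → (V → Bool))
    (hand : IsAndNet f) (hsd : SelfDual f) (heo : IsEvenNet f ∨ IsOddNet f) :
    ∃ (σ : Equiv.Perm V) (s : V → Bool), IsCircularWith f σ s ∧
      (IsEvenNet f → Even (negCount s)) ∧ (IsOddNet f → Odd (negCount s)) := by
  obtain ⟨τ, s, hf⟩ := hand.exists_eq_xor_of_selfDual hsd
  obtain ⟨c, hc⟩ := exists_range_conjNet_eq_parity heo
  set σ := Equiv.ofBijective τ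
    (Finite.surjective_iff_bijective.1 (surjective_of_range_conjNet_eq_parity hf hc))
  have hs : s ∈ Set.range (conjNet f) := ⟨_, conjNet_false_of_eq_xor hf⟩
  refine ⟨σ, s, ⟨fun i j => ?_, globalPos_iff_of_eq_xor hf, globalNeg_iff_of_eq_xor hf⟩,
    fun he => by rwa [he] at hs, fun ho => by rw [ho] at hs; exact Nat.not_even_iff_odd.1 hs⟩
  exact (sameCycle_of_range_conjNet_eq_parity (σ := σ) hf hc i j).exists_nat_pow_eq
end

section
/- Let f be an and-net and suppose there exists x ∈ {0,1}^V with f(x) = x and f(x ⊕ 1) = x ⊕ 1 (both x and its complement are fixed points). Then the signed global interaction graph G(f) has no negative cycle; moreover for any directed path of arcs from vertex i to vertex j, the parity of the number of negative arcs on the path equals x_i ⊕ x_j. -/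
/-- Signed arc `j → i`: positive if the sign bit is `false`, negative if it is `true`. -/
def signedArc {W : Type*} [DecidableEq W] (f : (W → Bool) → (W → Bool))
    (c : Bool) (j i : W) : Prop :=
  if c then globalNeg f j i else globalPos f j i

/-!
In an and-net every arc `j → i` of `G(f)` is an input of `f_i` with the same sign. If `y` is a
fixed point with `y i = 1`, every input `j` of `f_i` is forced: `y j = 1` for a positive input
and `y j = 0` for a negative one. Applying this to whichever of `x`, `x ⊕ 1` is `1` at `i` gives
`x_i = x_j` across a positive arc and `x_i ≠ x_j` across a negative one, so `x` flips exactly at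
the negative arcs of a path, and a closed walk has an even number of them.
-/

lemma card_filter_univ_fin_eq_card_filter_range (n : ℕ) (p : ℕ → Prop) [DecidablePred p] :
    (Finset.univ.filter fun t : Fin n => p t).card = ((Finset.range n).filter p).card := by
  simp only [Finset.card_filter]
  exact Fin.sum_univ_eq_sum_range (fun t => if p t then 1 else 0) n

section AndNet

variable {V : Type*} {f : (V → Bool) → (V → Bool)} {pos neg : V → V → Prop}
  (hf : ∀ x i, f x i = true ↔ (∀ j, pos j i → x j = true) ∧ (∀ j, neg j i → x j = false))
include hf

lemma apply_update_eq_of_not_pos_of_not_neg [DecidableEq V] {j i : V} (hp : ¬ pos j i)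
    (hn : ¬ neg j i) (y : V → Bool) (a b : Bool) :
    f (Function.update y j a) i = f (Function.update y j b) i := by
  have hne : ∀ k, (pos k i ∨ neg k i) → k ≠ j := by
    rintro k hk rfl
    tauto
  rw [Bool.eq_iff_iff, hf, hf]
  refine and_congr (forall_congr' fun k => imp_congr_right fun hk => ?_)
    (forall_congr' fun k => imp_congr_right fun hk => ?_) <;>
  simp only [Function.update_of_ne (hne k (by tauto))]

lemma pos_of_globalPos [DecidableEq V] {j i : V} (h : globalPos f j i) : pos j i := by
  obtain ⟨y, h_true, h_false⟩ := h
  by_contra hp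
  by_cases hn : neg j i
  · simpa using ((hf _ i).mp h_true).2 j hn
  · rw [apply_update_eq_of_not_pos_of_not_neg hf hp hn y false true, h_true] at h_false
    exact Bool.noConfusion h_false

lemma neg_of_globalNeg [DecidableEq V] {j i : V} (h : globalNeg f j i) : neg j i := by
  obtain ⟨y, h_true, h_false⟩ := h
  by_contra hn
  by_cases hp : pos j i
  · simpa using ((hf _ i).mp h_false).1 j hp
  · rw [apply_update_eq_of_not_pos_of_not_neg hf hp hn y true false, h_false] at h_true
    exact Bool.noConfusion h_true

lemma eq_of_pos_of_isFixedPt {x : V → Bool} (hx : f x = x)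
    (hx' : f (fun i => !(x i)) = fun i => !(x i)) {j i : V} (h : pos j i) : x i = x j := by
  cases hxi : x i
  · have hfx : f (fun i => !(x i)) i = true := by simp [hx', hxi]
    simpa using (((hf _ i).mp hfx).1 j h).symm
  · have hfx : f x i = true := by rw [hx, hxi]
    exact (((hf x i).mp hfx).1 j h).symm

lemma eq_not_of_neg_of_isFixedPt {x : V → Bool} (hx : f x = x)
    (hx' : f (fun i => !(x i)) = fun i => !(x i)) {j i : V} (h : neg j i) : x i = !x j := by
  cases hxi : x i
  · have hfx : f (fun i => !(x i)) i = true := by simp [hx', hxi]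
    simpa using (((hf _ i).mp hfx).2 j h).symm
  · have hfx : f x i = true := by rw [hx, hxi]
    simp [((hf x i).mp hfx).2 j h]

end AndNet

section IsAndNet

variable {V : Type*} [DecidableEq V] {f : (V → Bool) → (V → Bool)} {x : V → Bool}

lemma IsAndNet.eq_xor_of_signedArc (hand : IsAndNet f) (hx : f x = x)
    (hx' : f (fun i => !(x i)) = fun i => !(x i)) {c : Bool} {j i : V}
    (h : signedArc f c j i) : x i = xor c (x j) := by
  obtain ⟨pos, neg, -, hf⟩ := hand
  cases c
  · simpa using eq_of_pos_of_isFixedPt hf hx hx' (pos_of_globalPos hf h)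
  · simpa using eq_not_of_neg_of_isFixedPt hf hx hx' (neg_of_globalNeg hf h)

lemma IsAndNet.odd_card_neg_iff_ne (hand : IsAndNet f) (hx : f x = x)
    (hx' : f (fun i => !(x i)) = fun i => !(x i)) (l : ℕ) (v : ℕ → V) (c : ℕ → Bool)
    (h : ∀ t < l, signedArc f (c t) (v t) (v (t + 1))) :
    Odd (((Finset.range l).filter (fun t => c t = true)).card) ↔ x (v 0) ≠ x (v l) := by
  induction l with
  | zero => simp
  | succ l ih =>
    have ih := ih fun t ht => h t (Nat.lt_succ_of_lt ht)
    rw [hand.eq_xor_of_signedArc hx hx' (h l (Nat.lt_succ_self l)), Finset.range_add_one,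
      Finset.filter_insert]
    cases hc : c l
    · simpa using ih
    · rw [if_pos rfl, Finset.card_insert_of_notMem (by simp), Nat.odd_add_one, ih]
      cases x (v 0) <;> cases x (v l) <;> simp

end IsAndNet

open Fin.NatCast

theorem stmt_19_general {V : Type*} [DecidableEq V]
    (f : (V → Bool) → (V → Bool)) (hand : IsAndNet f)
    (x : V → Bool) (hx : f x = x) (hx' : f (fun i => !(x i)) = fun i => !(x i)) :
    -- parity of negative arcs along any path
    (∀ (l : ℕ) (v : ℕ → V) (c : ℕ → Bool),
      (∀ t < l, signedArc f (c t) (v t) (v (t + 1))) →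
      (Odd (((Finset.range l).filter (fun t => c t = true)).card) ↔
        x (v 0) ≠ x (v l))) ∧
    -- no negative cycle
    ¬ ∃ (k : ℕ) (v : Fin (k + 1) → V) (c : Fin (k + 1) → Bool),
        Function.Injective v ∧ (∀ t, signedArc f (c t) (v t) (v (t + 1))) ∧
        Odd ((Finset.univ.filter (fun t : Fin (k + 1) => c t = true)).card) := by
  refine ⟨hand.odd_card_neg_iff_ne hx hx', ?_⟩
  rintro ⟨k, v, c, -, harcs, hodd⟩
  have hpath : ∀ t < k + 1, signedArc f (c t) (v t) (v ((t + 1 : ℕ) : Fin (k + 1))) := by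
    intro t _
    simpa using harcs t
  have hcard := card_filter_univ_fin_eq_card_filter_range (k + 1) fun t => c t = true
  simp only [Fin.cast_val_eq_self] at hcard
  rw [hcard, hand.odd_card_neg_iff_ne hx hx' (k + 1) (fun t => v t) (fun t => c t) hpath] at hodd
  simp at hodd

/-- Let `f` be an and-net having both `x` and its complement as fixed points. Then
along every directed path of `G(f)`, the parity of the number of negative arcs equals
`x_i ⊕ x_j` where `i, j` are the endpoints; and `G(f)` has no negative cycle. -/
theorem stmt_19 {V : Type*} [Fintype V] [DecidableEq V]
    (f : (V → Bool) → (V → Bool)) (hand : IsAndNet f)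
    (x : V → Bool) (hx : f x = x) (hx' : f (fun i => !(x i)) = fun i => !(x i)) :
    -- parity of negative arcs along any path
    (∀ (l : ℕ) (v : ℕ → V) (c : ℕ → Bool),
      (∀ t < l, signedArc f (c t) (v t) (v (t + 1))) →
      (Odd (((Finset.range l).filter (fun t => c t = true)).card) ↔
        x (v 0) ≠ x (v l))) ∧
    -- no negative cycle
    ¬ ∃ (k : ℕ) (v : Fin (k + 1) → V) (c : Fin (k + 1) → Bool),
        Function.Injective v ∧ (∀ t, signedArc f (c t) (v t) (v (t + 1))) ∧
        Odd ((Finset.univ.filter (fun t : Fin (k + 1) => c t = true)).card) :=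
  stmt_19_general f hand x hx hx'
end
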